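/- arXiv:2002.09290 — 12 statements merged into one kernel-verified Lean document; each statement's English description precedes it below -/
import Mathlib

section
/- Let (X,⊥) be a point-closed orthogonality space. Call a map Λ : C(X,⊥) → C(X,⊥) an ortholattice automorphism if Λ is a bijection such that for all orthoclosed A, B one has A ⊆ B iff Λ(A) ⊆ Λ(B), and Λ(A^⊥) = Λ(A)^⊥. Then for every automorphism φ of (X,⊥) the map φ̄ : C(X,⊥) → C(X,⊥), A ↦ {φ(e) : e ∈ A}, is an ortholattice automorphism of C(X,⊥), and the assignment φ ↦ φ̄ is a group isomorphism from Aut(X,⊥) onto the group of all ortholattice automorphisms of C(X,⊥). -/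
variable {X : Type*}

/-- The orthocomplement of a subset of an orthogonality space. -/
def ortho (perp : X → X → Prop) (A : Set X) : Set X := {e | ∀ a ∈ A, perp e a}

/-- A subset is orthoclosed if it coincides with its double orthocomplement. -/
def OrthoClosed (perp : X → X → Prop) (A : Set X) : Prop :=
  ortho perp (ortho perp A) = A

variable (perp : X → X → Prop)

/-- The collection `C(X, ⊥)` of orthoclosed subsets. -/
def COS : Type _ := {A : Set X // OrthoClosed perp A}

lemma subset_ortho_ortho (hsymm : ∀ x y : X, perp x y → perp y x) (A : Set X) :
    A ⊆ ortho perp (ortho perp A) :=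
  fun e he b hb => hsymm b e (hb e he)

lemma ortho_antitone {A B : Set X} (h : A ⊆ B) : ortho perp B ⊆ ortho perp A :=
  fun e he a ha => he a (h ha)

lemma ortho_triple (hsymm : ∀ x y : X, perp x y → perp y x) (A : Set X) :
    ortho perp (ortho perp (ortho perp A)) = ortho perp A :=
  Set.Subset.antisymm (ortho_antitone perp (subset_ortho_ortho perp hsymm A))
    (subset_ortho_ortho perp hsymm (ortho perp A))

/-- The orthocomplementation on `C(X, ⊥)`. -/
def orthoCOS (hsymm : ∀ x y : X, perp x y → perp y x) (A : COS perp) : COS perp :=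
  ⟨ortho perp A.1, ortho_triple perp hsymm A.1⟩

/-- An ortholattice automorphism of `C(X, ⊥)`: a bijection which preserves and
reflects inclusion and commutes with orthocomplementation. -/
def IsOLAuto (hsymm : ∀ x y : X, perp x y → perp y x) (Λ : COS perp → COS perp) : Prop :=
  Function.Bijective Λ ∧
  (∀ A B : COS perp, A.1 ⊆ B.1 ↔ (Λ A).1 ⊆ (Λ B).1) ∧
  (∀ A : COS perp, Λ (orthoCOS perp hsymm A) = orthoCOS perp hsymm (Λ A))

/-- The group of automorphisms of the orthogonality space `(X, perp)`, as a
subgroup of the permutation group of `X`. -/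
def AutGroup : Subgroup (Equiv.Perm X) where
  carrier := {φ | ∀ x y : X, perp x y ↔ perp (φ x) (φ y)}
  one_mem' := fun _ _ => Iff.rfl
  mul_mem' := by
    intro φ ψ hφ hψ x y
    exact (hψ x y).trans (hφ (ψ x) (ψ y))
  inv_mem' := by
    intro φ hφ x y
    simpa using (hφ (φ⁻¹ x) (φ⁻¹ y)).symm

lemma ortho_image (φ : Equiv.Perm X) (hφ : ∀ x y : X, perp x y ↔ perp (φ x) (φ y))
    (A : Set X) : ortho perp (⇑φ '' A) = ⇑φ '' ortho perp A := by
  ext e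
  constructor
  · intro he
    refine ⟨φ.symm e, fun a ha => ?_, φ.apply_symm_apply e⟩
    have h1 := he (φ a) ⟨a, ha, rfl⟩
    have h2 := (hφ (φ.symm e) a).mpr
    rw [φ.apply_symm_apply] at h2
    exact h2 h1
  · rintro ⟨x, hx, rfl⟩ b ⟨a, ha, rfl⟩
    exact (hφ x a).mp (hx a ha)

lemma orthoClosed_image (φ : Equiv.Perm X) (hφ : ∀ x y : X, perp x y ↔ perp (φ x) (φ y))
    {A : Set X} (hA : OrthoClosed perp A) : OrthoClosed perp (⇑φ '' A) := by
  unfold OrthoClosed at *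
  rw [ortho_image perp φ hφ, ortho_image perp φ hφ, hA]

/-- The map `φ̄` on `C(X, ⊥)` induced by an automorphism `φ` of `(X, ⊥)`:
`A ↦ {φ e : e ∈ A}`. -/
def barCOS (φ : AutGroup perp) (A : COS perp) : COS perp :=
  ⟨⇑(φ : Equiv.Perm X) '' A.1, orthoClosed_image perp (φ : Equiv.Perm X) φ.2 A.2⟩

/-!
An inclusion-preserving bijection `Λ` of `C(X, ⊥)` fixes `∅` and, since
`C(X, ⊥)` contains all singletons, maps singletons (the minimal nonempty elements) to
singletons; this defines a point map `f` with `e ∈ A ↔ f e ∈ Λ A`. Applied to `A = {b}`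
and to `A = {b}^⊥` this makes `f` a bijection preserving and reflecting `⊥`, and
`Λ = f̄`. Conversely `φ ↦ φ̄` is a group action, and `φ̄` determines `φ` on singletons.
-/

variable {perp}

@[ext]
lemma COS.ext {A B : COS perp} (h : A.1 = B.1) : A = B :=
  Subtype.ext h

lemma mem_ortho_singleton {a b : X} : a ∈ ortho perp {b} ↔ perp a b := by
  simp [ortho]

lemma orthoClosed_empty (hirr : ∀ x : X, ¬ perp x x) : OrthoClosed perp (∅ : Set X) :=
  Set.eq_empty_of_forall_notMem fun e he => hirr e (he e fun _ h => h.elim)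

instance : MulAction (AutGroup perp) (COS perp) where
  smul := barCOS perp
  one_smul A := COS.ext (Set.image_id A.1)
  mul_smul φ ψ A := COS.ext (Set.image_comp (φ : Equiv.Perm X) (ψ : Equiv.Perm X) A.1)

lemma barCOS_mul (φ ψ : AutGroup perp) :
    barCOS perp (φ * ψ) = barCOS perp φ ∘ barCOS perp ψ :=
  funext (mul_smul φ ψ)

lemma isOLAuto_barCOS (hsymm : ∀ x y : X, perp x y → perp y x) (φ : AutGroup perp) :
    IsOLAuto perp hsymm (barCOS perp φ) :=
  ⟨MulAction.bijective φ,
    fun _ _ => (Set.image_subset_image_iff (φ : Equiv.Perm X).injective).symm,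
    fun A => COS.ext (ortho_image perp (φ : Equiv.Perm X) φ.2 A.1).symm⟩

lemma barCOS_injective (hpc : ∀ e : X, OrthoClosed perp {e}) :
    Function.Injective (barCOS perp) := by
  intro φ ψ h
  ext e
  have hsingleton := congrArg Subtype.val (congrFun h ⟨{e}, hpc e⟩)
  simp only [barCOS, Set.image_singleton] at hsingleton
  exact Set.singleton_eq_singleton_iff.mp hsingleton

namespace IsOLAuto

variable {hsymm : ∀ x y : X, perp x y → perp y x} {Λ : COS perp → COS perp}

lemma map_empty (hΛ : IsOLAuto perp hsymm Λ) (hirr : ∀ x : X, ¬ perp x x) :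
    (Λ ⟨∅, orthoClosed_empty hirr⟩).1 = ∅ := by
  obtain ⟨B, hB⟩ := hΛ.1.2 ⟨∅, orthoClosed_empty hirr⟩
  have hle := (hΛ.2.1 ⟨∅, orthoClosed_empty hirr⟩ B).mp (Set.empty_subset _)
  rwa [hB, Set.subset_empty_iff] at hle

lemma map_eq_empty_iff (hΛ : IsOLAuto perp hsymm Λ) (hirr : ∀ x : X, ¬ perp x x)
    (A : COS perp) : (Λ A).1 = ∅ ↔ A.1 = ∅ := by
  refine ⟨fun h => ?_, fun h => ?_⟩
  · exact congrArg Subtype.val (hΛ.1.1 (COS.ext (h.trans (hΛ.map_empty hirr).symm)))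
  · obtain rfl : A = ⟨∅, orthoClosed_empty hirr⟩ := COS.ext h
    exact hΛ.map_empty hirr

lemma map_nonempty_iff (hΛ : IsOLAuto perp hsymm Λ) (hirr : ∀ x : X, ¬ perp x x)
    (A : COS perp) : (Λ A).1.Nonempty ↔ A.1.Nonempty := by
  simp only [Set.nonempty_iff_ne_empty, ne_eq, hΛ.map_eq_empty_iff hirr]

lemma exists_map_singleton (hΛ : IsOLAuto perp hsymm Λ) (hirr : ∀ x : X, ¬ perp x x)
    (hpc : ∀ e : X, OrthoClosed perp {e}) (e : X) :
    ∃ f : X, (Λ ⟨{e}, hpc e⟩).1 = {f} := by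
  obtain ⟨f, hf⟩ := (hΛ.map_nonempty_iff hirr ⟨{e}, hpc e⟩).mpr (Set.singleton_nonempty e)
  obtain ⟨B, hB⟩ := hΛ.1.2 ⟨{f}, hpc f⟩
  have hBe : B.1 ⊆ {e} :=
    (hΛ.2.1 B ⟨{e}, hpc e⟩).mpr (hB ▸ Set.singleton_subset_iff.mpr hf)
  have hBne : B.1.Nonempty := (hΛ.map_nonempty_iff hirr B).mp (by rw [hB]; exact ⟨f, rfl⟩)
  have hBeq : B = ⟨{e}, hpc e⟩ :=
    COS.ext ((Set.subset_singleton_iff_eq.mp hBe).resolve_left hBne.ne_empty)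
  exact ⟨f, by rw [← hBeq, hB]⟩

section PointMap

variable {hpc : ∀ e : X, OrthoClosed perp {e}} {f : X → X}

lemma mem_iff_apply_mem (hΛ : IsOLAuto perp hsymm Λ)
    (hf : ∀ e, (Λ ⟨{e}, hpc e⟩).1 = {f e}) (e : X) (A : COS perp) :
    e ∈ A.1 ↔ f e ∈ (Λ A).1 := by
  rw [← Set.singleton_subset_iff, ← Set.singleton_subset_iff, ← hf]
  exact hΛ.2.1 ⟨{e}, hpc e⟩ A

lemma bijective_of_map_singleton (hΛ : IsOLAuto perp hsymm Λ) (hirr : ∀ x : X, ¬ perp x x)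
    (hf : ∀ e, (Λ ⟨{e}, hpc e⟩).1 = {f e}) : Function.Bijective f := by
  refine ⟨fun a b hab => ?_, fun y => ?_⟩
  · have hmem := hΛ.mem_iff_apply_mem hf a ⟨{b}, hpc b⟩
    rw [hf, hab] at hmem
    exact hmem.mpr rfl
  · obtain ⟨B, hB⟩ := hΛ.1.2 ⟨{y}, hpc y⟩
    obtain ⟨e, he⟩ := (hΛ.map_nonempty_iff hirr B).mp (by rw [hB]; exact ⟨y, rfl⟩)
    have hfe := (hΛ.mem_iff_apply_mem hf e B).mp he
    rw [hB] at hfe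
    exact ⟨e, hfe⟩

lemma perp_iff_of_map_singleton (hΛ : IsOLAuto perp hsymm Λ)
    (hf : ∀ e, (Λ ⟨{e}, hpc e⟩).1 = {f e}) (a b : X) :
    perp a b ↔ perp (f a) (f b) := by
  have hmem := hΛ.mem_iff_apply_mem hf a (orthoCOS perp hsymm ⟨{b}, hpc b⟩)
  rw [hΛ.2.2 ⟨{b}, hpc b⟩] at hmem
  change a ∈ ortho perp {b} ↔ f a ∈ ortho perp (Λ ⟨{b}, hpc b⟩).1 at hmem
  rwa [hf, mem_ortho_singleton, mem_ortho_singleton] at hmem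

end PointMap

lemma exists_barCOS_eq (hΛ : IsOLAuto perp hsymm Λ) (hirr : ∀ x : X, ¬ perp x x)
    (hpc : ∀ e : X, OrthoClosed perp {e}) : ∃ φ : AutGroup perp, barCOS perp φ = Λ := by
  choose f hf using hΛ.exists_map_singleton hirr hpc
  have hbij := hΛ.bijective_of_map_singleton hirr hf
  refine ⟨⟨Equiv.ofBijective f hbij, hΛ.perp_iff_of_map_singleton hf⟩, funext fun A => ?_⟩
  ext x
  obtain ⟨e, rfl⟩ := hbij.2 x
  simp only [barCOS, Equiv.ofBijective_apply, hbij.1.mem_set_image]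
  exact hΛ.mem_iff_apply_mem hf e A

end IsOLAuto

theorem stmt2_general {X : Type*} (perp : X → X → Prop)
    (hsymm : ∀ x y : X, perp x y → perp y x)
    (hirr : ∀ x : X, ¬ perp x x)
    (hpc : ∀ e : X, OrthoClosed perp {e}) :
    -- `φ̄` is an ortholattice automorphism of `C(X, ⊥)` for every `φ ∈ Aut(X, ⊥)`
    (∀ φ : AutGroup perp, IsOLAuto perp hsymm (barCOS perp φ)) ∧
    -- `φ ↦ φ̄` is multiplicative
    (∀ φ ψ : AutGroup perp, barCOS perp (φ * ψ) = barCOS perp φ ∘ barCOS perp ψ) ∧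
    -- `φ ↦ φ̄` is injective
    Function.Injective (barCOS perp) ∧
    -- `φ ↦ φ̄` is onto the group of all ortholattice automorphisms of `C(X, ⊥)`
    (∀ Λ : COS perp → COS perp, IsOLAuto perp hsymm Λ →
      ∃ φ : AutGroup perp, barCOS perp φ = Λ) :=
  ⟨isOLAuto_barCOS hsymm, barCOS_mul, barCOS_injective hpc,
    fun _ hΛ => hΛ.exists_barCOS_eq hirr hpc⟩

/-- For a point-closed orthogonality space, `φ ↦ φ̄` is a group
isomorphism from `Aut(X, ⊥)` onto the group of all ortholattice automorphisms of
`C(X, ⊥)`. -/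
theorem stmt2 {X : Type*} [Nonempty X] (perp : X → X → Prop)
    (hsymm : ∀ x y : X, perp x y → perp y x)
    (hirr : ∀ x : X, ¬ perp x x)
    (hpc : ∀ e : X, OrthoClosed perp {e}) :
    -- `φ̄` is an ortholattice automorphism of `C(X, ⊥)` for every `φ ∈ Aut(X, ⊥)`
    (∀ φ : AutGroup perp, IsOLAuto perp hsymm (barCOS perp φ)) ∧
    -- `φ ↦ φ̄` is multiplicative
    (∀ φ ψ : AutGroup perp, barCOS perp (φ * ψ) = barCOS perp φ ∘ barCOS perp ψ) ∧
    -- `φ ↦ φ̄` is injective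
    Function.Injective (barCOS perp) ∧
    -- `φ ↦ φ̄` is onto the group of all ortholattice automorphisms of `C(X, ⊥)`
    (∀ Λ : COS perp → COS perp, IsOLAuto perp hsymm Λ →
      ∃ φ : AutGroup perp, barCOS perp φ = Λ) :=
  stmt2_general perp hsymm hirr hpc
end

section
/- Let K be a *-sfield and let H be a finite-dimensional Hermitian space over K. Then the orthogonality space (P(H),⊥) satisfies conditions (L1) and (L2). -/
variable {X : Type*}

/-- The orthogonality space `(X, perp)` has rank `m`: it contains `m` mutually
orthogonal elements but not `m + 1`. -/
def HasRank (perp : X → X → Prop) (m : ℕ) : Prop :=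
  (∃ D : Finset X, D.card = m ∧ (D : Set X).Pairwise perp) ∧
    ∀ D : Finset X, (D : Set X).Pairwise perp → D.card ≤ m

/-- Irredundance: elements with the same orthocomplement coincide. -/
def Irredundant (perp : X → X → Prop) : Prop :=
  ∀ e f : X, ortho perp {e} = ortho perp {f} → e = f

/-- Condition (L₁). -/
def CondL1 (perp : X → X → Prop) : Prop :=
  ∀ e f : X, f ≠ e → ∃ g : X, perp g e ∧ ortho perp {e, g} = ortho perp {e, f}

/-- Condition (L₂). -/
def CondL2 (perp : X → X → Prop) : Prop :=
  ∀ e g : X, perp g e → ∃ f : X, f ≠ e ∧ f ≠ g ∧ ortho perp {e, g} = ortho perp {e, f}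

section Proj

variable (K : Type*) [DivisionRing K] (H : Type*) [AddCommGroup H] [Module K H]

/-- The projective space of `H`: its one-dimensional subspaces. -/
def ProjPoint : Type _ :=
  {p : Submodule K H // ∃ v : H, v ≠ 0 ∧ p = Submodule.span K {v}}

variable (B : H → H → K)

/-- Orthogonality of one-dimensional subspaces with respect to the form `B`. -/
def projPerp (p q : ProjPoint K H) : Prop := ∀ u ∈ p.1, ∀ w ∈ q.1, B u w = 0

end Proj

/-! For (L1), a line `⟨y⟩ ≠ ⟨x⟩` is replaced by the line of `y - (B y x / B x x) x`, which is
orthogonal to `x` (one Gram–Schmidt step); for (L2), when `⟨y⟩ ⊥ ⟨x⟩` the line `⟨x + y⟩` differs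
from both. In either case the new vector differs from the old one by a multiple of `x`, so the
two lines have the same orthogonal complement inside `x^⊥`. -/

lemma ortho_pair_eq_ortho_pair_iff {perp : X → X → Prop} {e f g : X} :
    ortho perp {e, g} = ortho perp {e, f} ↔ ∀ z, perp z e → (perp z g ↔ perp z f) := by
  simp only [Set.ext_iff, ortho, Set.mem_insert_iff, Set.mem_singleton_iff, Set.mem_ofPred_eq,
    forall_eq_or_imp, forall_eq]
  exact forall_congr' fun z => and_congr_right_iff

namespace ProjPoint

variable {K : Type*} [DivisionRing K] {H : Type*} [AddCommGroup H] [Module K H]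

def mk (v : H) (hv : v ≠ 0) : ProjPoint K H := ⟨K ∙ v, v, hv, rfl⟩

lemma exists_eq_mk (p : ProjPoint K H) : ∃ v, ∃ hv : v ≠ 0, p = mk v hv := by
  obtain ⟨v, hv, hp⟩ := p.2
  exact ⟨v, hv, Subtype.ext hp⟩

lemma mk_eq_mk_of_eq_smul {c : K} (hc : c ≠ 0) {v w : H} (hw : w ≠ 0) (hv : v ≠ 0)
    (h : w = c • v) : (mk w hw : ProjPoint K H) = mk v hv := by
  subst h
  exact Subtype.ext (Submodule.span_singleton_smul_eq (IsUnit.mk0 c hc) v)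

end ProjPoint

namespace projPerp

open ProjPoint

variable {K : Type*} [DivisionRing K] [StarRing K] {H : Type*} [AddCommGroup H] [Module K H]
  {B : H → H → K}

lemma mk_iff (hsmul_left : ∀ (a : K) (u v : H), B (a • u) v = a * B u v)
    (hsmul_right : ∀ (a : K) (u v : H), B u (a • v) = B u v * star a)
    {v w : H} (hv : v ≠ 0) (hw : w ≠ 0) : projPerp K H B (mk v hv) (mk w hw) ↔ B v w = 0 := by
  refine ⟨fun h => h v (Submodule.mem_span_singleton_self v) w
    (Submodule.mem_span_singleton_self w), ?_⟩
  intro h u hu u' hu'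
  obtain ⟨a, rfl⟩ := Submodule.mem_span_singleton.1 hu
  obtain ⟨b, rfl⟩ := Submodule.mem_span_singleton.1 hu'
  rw [hsmul_left, hsmul_right, h, zero_mul, mul_zero]

lemma ortho_pair_mk_eq (hsmul_left : ∀ (a : K) (u v : H), B (a • u) v = a * B u v)
    (hsmul_right : ∀ (a : K) (u v : H), B u (a • v) = B u v * star a)
    {x w y : H} (hx : x ≠ 0) (hw : w ≠ 0) (hy : y ≠ 0)
    (h : ∀ u, B u x = 0 → B u w = B u y) :
    ortho (projPerp K H B) {mk x hx, mk w hw} = ortho (projPerp K H B) {mk x hx, mk y hy} := by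
  refine ortho_pair_eq_ortho_pair_iff.2 fun z hzx => ?_
  obtain ⟨u, hu, rfl⟩ := z.exists_eq_mk
  rw [mk_iff hsmul_left hsmul_right] at hzx ⊢
  rw [mk_iff hsmul_left hsmul_right, h u hzx]

lemma condL1 (hadd_left : ∀ u v w : H, B (u + v) w = B u w + B v w)
    (hadd_right : ∀ u v w : H, B u (v + w) = B u v + B u w)
    (hsmul_left : ∀ (a : K) (u v : H), B (a • u) v = a * B u v)
    (hsmul_right : ∀ (a : K) (u v : H), B u (a • v) = B u v * star a)
    (haniso : ∀ u : H, B u u = 0 → u = 0) :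
    CondL1 (projPerp K H B) := by
  intro e f hfe
  obtain ⟨x, hx, rfl⟩ := e.exists_eq_mk
  obtain ⟨y, hy, rfl⟩ := f.exists_eq_mk
  have hxx : B x x ≠ 0 := mt (haniso x) hx
  set c := B y x * (B x x)⁻¹
  set w := y + (-c) • x with hw_def
  have hwx : B w x = 0 := by
    rw [hadd_left, hsmul_left, neg_mul, mul_assoc, inv_mul_cancel₀ hxx, mul_one, add_neg_cancel]
  have hw : w ≠ 0 := by
    intro hw0
    have hyc : y = c • x := by rwa [hw_def, neg_smul, add_neg_eq_zero] at hw0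
    have hc : c ≠ 0 := by rintro hc; rw [hc, zero_smul] at hyc; exact hy hyc
    exact hfe (mk_eq_mk_of_eq_smul hc hy hx hyc)
  refine ⟨mk w hw, (mk_iff hsmul_left hsmul_right hw hx).2 hwx,
    ortho_pair_mk_eq hsmul_left hsmul_right hx hw hy fun u hux => ?_⟩
  rw [hadd_right, hsmul_right, hux, zero_mul, add_zero]

lemma condL2 (hadd_left : ∀ u v w : H, B (u + v) w = B u w + B v w)
    (hadd_right : ∀ u v w : H, B u (v + w) = B u v + B u w)
    (hsmul_left : ∀ (a : K) (u v : H), B (a • u) v = a * B u v)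
    (hsmul_right : ∀ (a : K) (u v : H), B u (a • v) = B u v * star a)
    (haniso : ∀ u : H, B u u = 0 → u = 0) :
    CondL2 (projPerp K H B) := by
  intro e g hge
  obtain ⟨x, hx, rfl⟩ := e.exists_eq_mk
  obtain ⟨y, hy, rfl⟩ := g.exists_eq_mk
  have hyx : B y x = 0 := (mk_iff hsmul_left hsmul_right hy hx).1 hge
  have hsx : B (x + y) x ≠ 0 := by rw [hadd_left, hyx, add_zero]; exact mt (haniso x) hx
  have hs : x + y ≠ 0 := by
    rintro h
    rw [h, ← zero_smul K (0 : H), hsmul_left, zero_mul] at hsx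
    exact hsx rfl
  have hys : B y (x + y) ≠ 0 := by rw [hadd_right, hyx, zero_add]; exact mt (haniso y) hy
  -- `⟨x + y⟩` is told apart from `⟨x⟩` by `⟨y⟩`, and from `⟨y⟩` by `⟨x⟩`.
  refine ⟨mk (x + y) hs, fun h => ?_, fun h => ?_,
    ortho_pair_mk_eq hsmul_left hsmul_right hx hy hs fun u hux => ?_⟩
  · rw [← h, mk_iff hsmul_left hsmul_right] at hge
    exact hys hge
  · rw [← h, mk_iff hsmul_left hsmul_right] at hge
    exact hsx hge
  · rw [hadd_right, hux, zero_add]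

end projPerp

theorem stmt3_general (K : Type*) [DivisionRing K] [StarRing K]
    (H : Type*) [AddCommGroup H] [Module K H]
    (B : H → H → K)
    (hadd_left : ∀ u v w : H, B (u + v) w = B u w + B v w)
    (hadd_right : ∀ u v w : H, B u (v + w) = B u v + B u w)
    (hsmul_left : ∀ (a : K) (u v : H), B (a • u) v = a * B u v)
    (hsmul_right : ∀ (a : K) (u v : H), B u (a • v) = B u v * star a)
    (haniso : ∀ u : H, B u u = 0 → u = 0) :
    CondL1 (projPerp K H B) ∧ CondL2 (projPerp K H B) :=
  ⟨projPerp.condL1 hadd_left hadd_right hsmul_left hsmul_right haniso,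
    projPerp.condL2 hadd_left hadd_right hsmul_left hsmul_right haniso⟩

/-- For any finite-dimensional Hermitian space `H` over a
`⋆`-sfield `K`, the orthogonality space `(P(H), ⊥)` satisfies (L₁) and (L₂). -/
theorem stmt3 (K : Type*) [DivisionRing K] [StarRing K]
    (H : Type*) [AddCommGroup H] [Module K H] [FiniteDimensional K H]
    (B : H → H → K)
    (hadd_left : ∀ u v w : H, B (u + v) w = B u w + B v w)
    (hadd_right : ∀ u v w : H, B u (v + w) = B u v + B u w)
    (hsmul_left : ∀ (a : K) (u v : H), B (a • u) v = a * B u v)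
    (hsmul_right : ∀ (a : K) (u v : H), B u (a • v) = B u v * star a)
    (hconj : ∀ u v : H, B u v = star (B v u))
    (haniso : ∀ u : H, B u u = 0 → u = 0) :
    CondL1 (projPerp K H B) ∧ CondL2 (projPerp K H B) :=
  stmt3_general K H B hadd_left hadd_right hsmul_left hsmul_right haniso
end

section
/- Let (X,⊥) be an irredundant orthogonality space of finite rank satisfying condition (L1). Then (X,⊥) is point-closed, that is, {e}^⊥⊥ = {e} for every e ∈ X. -/
variable {X : Type*}

/-- An irredundant orthogonality space of finite rank
satisfying (L₁) is point-closed. -/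
theorem stmt4 {X : Type*} [Nonempty X] (perp : X → X → Prop)
    (hsymm : ∀ x y : X, perp x y → perp y x)
    (hirr : ∀ x : X, ¬ perp x x)
    (hirred : Irredundant perp)
    (hrank : ∃ m : ℕ, 0 < m ∧ HasRank perp m)
    (hL1 : CondL1 perp) :
    ∀ e : X, ortho perp (ortho perp {e}) = {e} := by
  intro e
  apply Set.eq_of_subset_of_subset
  · intro f hf
    by_contra hfe
    simp only [Set.mem_singleton_iff] at hfe
    obtain ⟨g, hge, heq⟩ := hL1 e f hfe
    have hfperp : ∀ a : X, perp a e → perp f a := by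
      intro a ha
      exact hf a (by intro b hb; simp at hb; subst hb; exact ha)
    have hg : g ∈ ortho perp {e, f} := by
      intro a ha
      rcases ha with rfl | ha
      · exact hge
      · simp at ha; subst ha
        exact hsymm _ _ (hfperp g hge)
    rw [← heq] at hg
    exact hirr g (hg g (by simp))
  · intro f hf
    simp only [Set.mem_singleton_iff] at hf; subst hf
    intro a ha
    exact hsymm _ _ (ha _ (Set.mem_singleton _))
end

section
/- Let (X,⊥) be an irredundant orthogonality space of finite rank satisfying condition (L1). Let D ⊆ X be a set of mutually orthogonal elements and let e ∈ X with e ∉ D^⊥⊥. Then there exists f ∈ X such that f ⊥ d for all d ∈ D and (D ∪ {e})^⊥⊥ = (D ∪ {f})^⊥⊥. -/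
variable {X : Type*}

/-!
The rank bound makes `D` finite. If the candidate `c` (initially `e`) is not orthogonal to some
`d ∈ D`, then (L1) replaces `c` by some `g ⊥ d` with `{d, g}^⊥ = {d, c}^⊥`; since `d ∈ D` this
leaves `(D ∪ {c})^⊥` unchanged, and every `d' ∈ D` orthogonal to `c` stays orthogonal to `g`.
So the number of elements of `D` not orthogonal to the candidate drops, and the process ends
with a candidate `f ⊥ D`. It cannot get stuck at `c = d ∈ D` because `e ∉ D^⊥⊥`.
-/

namespace Ortho

variable {perp : X → X → Prop}

lemma ortho_union (A B : Set X) : ortho perp (A ∪ B) = ortho perp A ∩ ortho perp B := by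
  ext x
  simp only [ortho, Set.mem_union, or_imp, forall_and, Set.mem_inter_iff, Set.mem_ofPred_eq]

lemma ortho_union_singleton_eq_of_ortho_pair_eq {D : Set X} {d c g : X} (hd : d ∈ D)
    (h : ortho perp {d, g} = ortho perp {d, c}) :
    ortho perp (D ∪ {g}) = ortho perp (D ∪ {c}) := by
  have hD : ∀ x, D ∪ {x} = D ∪ {d, x} := fun x => by
    rw [Set.union_insert, Set.insert_eq_of_mem (Set.mem_union_left _ hd)]
  rw [hD g, hD c, ortho_union, ortho_union, h]

lemma mem_ortho_ortho_of_ortho_union_singleton_eq (hsymm : ∀ x y, perp x y → perp y x)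
    {D : Set X} {e : X} (h : ortho perp (D ∪ {e}) = ortho perp D) :
    e ∈ ortho perp (ortho perp D) := fun a ha =>
  hsymm _ _ ((h ▸ ha : a ∈ ortho perp (D ∪ {e})) e (Or.inr rfl))

lemma finite_of_pairwise_of_card_le {m : ℕ}
    (hbound : ∀ D : Finset X, (D : Set X).Pairwise perp → D.card ≤ m)
    {D : Set X} (hD : D.Pairwise perp) : D.Finite := by
  by_contra hinf
  obtain ⟨t, hts, htc⟩ := Set.Infinite.exists_subset_card_eq hinf (m + 1)
  have := hbound t (hD.mono hts)
  omega

lemma setOf_not_perp_ssubset (hsymm : ∀ x y, perp x y → perp y x)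
    {D : Set X} (hD : D.Pairwise perp) {d c g : X} (hd : d ∈ D) (hcd : ¬ perp c d)
    (hgd : perp g d) (h : ortho perp {d, g} = ortho perp {d, c}) :
    {x ∈ D | ¬ perp g x} ⊂ {x ∈ D | ¬ perp c x} := by
  refine Set.ssubset_iff_sdiff_singleton.mpr ⟨d, ⟨hd, hcd⟩, ?_⟩
  rintro x ⟨hxD, hgx⟩
  have hxd : x ≠ d := by rintro rfl; exact hgx hgd
  refine ⟨⟨hxD, fun hcx => hgx ?_⟩, hxd⟩
  have hx : x ∈ ortho perp {d, c} := by
    rintro a (rfl | rfl)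
    · exact hD hxD hd hxd
    · exact hsymm _ _ hcx
  exact hsymm _ _ ((h ▸ hx : x ∈ ortho perp {d, g}) g (Or.inr rfl))

lemma exists_perp_of_ortho_union_singleton_ne (hsymm : ∀ x y, perp x y → perp y x)
    (hL1 : CondL1 perp) {D : Set X} (hDfin : D.Finite) (hD : D.Pairwise perp) (c : X)
    (hc : ortho perp (D ∪ {c}) ≠ ortho perp D) :
    ∃ f, (∀ d ∈ D, perp f d) ∧ ortho perp (D ∪ {f}) = ortho perp (D ∪ {c}) := by
  by_cases hall : ∀ d ∈ D, perp c d
  · exact ⟨c, hall, rfl⟩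
  obtain ⟨d, hd, hcd⟩ := not_forall₂.mp hall
  have hcne : c ≠ d := by
    rintro rfl
    exact hc (by rw [Set.union_singleton, Set.insert_eq_of_mem hd])
  obtain ⟨g, hgd, hdg⟩ := hL1 d c hcne
  have hg := ortho_union_singleton_eq_of_ortho_pair_eq hd hdg
  have : {x ∈ D | ¬ perp g x}.ncard < {x ∈ D | ¬ perp c x}.ncard :=
    Set.ncard_lt_ncard (setOf_not_perp_ssubset hsymm hD hd hcd hgd hdg) (hDfin.sep _)
  obtain ⟨f, hf, hfg⟩ :=
    exists_perp_of_ortho_union_singleton_ne hsymm hL1 hDfin hD g (hg ▸ hc)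
  exact ⟨f, hf, hfg.trans hg⟩
termination_by {x ∈ D | ¬ perp c x}.ncard

end Ortho

open Ortho in
theorem stmt5_general {X : Type*} (perp : X → X → Prop)
    (hsymm : ∀ x y : X, perp x y → perp y x)
    (hrank : ∃ m : ℕ, 0 < m ∧ HasRank perp m)
    (hL1 : CondL1 perp)
    (D : Set X) (hD : D.Pairwise perp)
    (e : X) (he : e ∉ ortho perp (ortho perp D)) :
    ∃ f : X, (∀ d ∈ D, perp f d) ∧
      ortho perp (ortho perp (D ∪ {e})) = ortho perp (ortho perp (D ∪ {f})) := by
  obtain ⟨m, -, -, hbound⟩ := hrank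
  have hDfin : D.Finite := finite_of_pairwise_of_card_le hbound hD
  have hne : ortho perp (D ∪ {e}) ≠ ortho perp D := fun h =>
    he (mem_ortho_ortho_of_ortho_union_singleton_eq hsymm h)
  obtain ⟨f, hf, hfe⟩ := exists_perp_of_ortho_union_singleton_ne hsymm hL1 hDfin hD e hne
  exact ⟨f, hf, by rw [hfe]⟩

/-- In an irredundant orthogonality space of finite rank
satisfying (L₁), for any orthogonal subset `D` and any `e ∉ D^⊥⊥` there is an
`f ⊥ D` with `(D ∪ {e})^⊥⊥ = (D ∪ {f})^⊥⊥`. -/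
theorem stmt5 {X : Type*} [Nonempty X] (perp : X → X → Prop)
    (hsymm : ∀ x y : X, perp x y → perp y x)
    (hirr : ∀ x : X, ¬ perp x x)
    (hirred : Irredundant perp)
    (hrank : ∃ m : ℕ, 0 < m ∧ HasRank perp m)
    (hL1 : CondL1 perp)
    (D : Set X) (hD : D.Pairwise perp)
    (e : X) (he : e ∉ ortho perp (ortho perp D)) :
    ∃ f : X, (∀ d ∈ D, perp f d) ∧
      ortho perp (ortho perp (D ∪ {e})) = ortho perp (ortho perp (D ∪ {f})) :=
  stmt5_general perp hsymm hrank hL1 D hD e he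
end

section
/- Let (X,⊥) be an orthogonality space. Then the following are equivalent: (a) C(X,⊥) is orthomodular, i.e., for all orthoclosed sets A ⊆ B one has B = (A ∪ (B ∩ A^⊥))^⊥⊥; (b) for every orthoclosed set A and every subset D of A that is maximal among the orthogonal subsets of A (with respect to inclusion), one has A = D^⊥⊥. -/
variable {X : Type*}

lemma ortho_anti (perp : X → X → Prop) {A B : Set X} (h : A ⊆ B) :
    ortho perp B ⊆ ortho perp A := fun e he a ha => he a (h ha)

lemma subset_oo (perp : X → X → Prop) (hsymm : ∀ x y, perp x y → perp y x)
    (A : Set X) : A ⊆ ortho perp (ortho perp A) :=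
  fun a ha e he => hsymm _ _ (he a ha)

lemma ooo (perp : X → X → Prop) (hsymm : ∀ x y, perp x y → perp y x) (A : Set X) :
    ortho perp (ortho perp (ortho perp A)) = ortho perp A :=
  Set.Subset.antisymm (ortho_anti perp (subset_oo perp hsymm A)) (subset_oo perp hsymm _)

lemma exists_max_orth (perp : X → X → Prop) (B D : Set X) (hDB : D ⊆ B)
    (hD : D.Pairwise perp) :
    ∃ E, D ⊆ E ∧ E ⊆ B ∧ E.Pairwise perp ∧
      ∀ E', E' ⊆ B → E'.Pairwise perp → E ⊆ E' → E' = E := by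
  obtain ⟨E, hDE, hmax⟩ := zorn_subset_nonempty {E : Set X | E ⊆ B ∧ E.Pairwise perp}
    (fun c hcS hchain hcne => by
      refine ⟨⋃₀ c, ⟨?_, ?_⟩, fun s hs => Set.subset_sUnion_of_mem hs⟩
      · exact Set.sUnion_subset fun s hs => (hcS hs).1
      · intro x hx y hy hxy
        obtain ⟨s, hs, hxs⟩ := hx
        obtain ⟨t, ht, hyt⟩ := hy
        rcases hchain.total hs ht with h | h
        · exact (hcS ht).2 (h hxs) hyt hxy
        · exact (hcS hs).2 hxs (h hyt) hxy) D ⟨hDB, hD⟩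
  exact ⟨E, hDE, hmax.prop.1, hmax.prop.2,
    fun E' h1 h2 h3 => (hmax.eq_of_ge ⟨h1, h2⟩ h3)⟩

/-- Dacey's criterion. `C(X, ⊥)` is orthomodular if and only
if every orthoclosed set `A` equals `D^⊥⊥` for every maximal orthogonal subset
`D` of `A`. -/
theorem stmt6 {X : Type*} [Nonempty X] (perp : X → X → Prop)
    (hsymm : ∀ x y : X, perp x y → perp y x)
    (hirr : ∀ x : X, ¬ perp x x) :
    (∀ A B : Set X, OrthoClosed perp A → OrthoClosed perp B → A ⊆ B →
        B = ortho perp (ortho perp (A ∪ (B ∩ ortho perp A)))) ↔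
      (∀ A : Set X, OrthoClosed perp A →
        ∀ D : Set X, D ⊆ A → D.Pairwise perp →
          (∀ D' : Set X, D' ⊆ A → D'.Pairwise perp → D ⊆ D' → D' = D) →
          A = ortho perp (ortho perp D)) := by
  constructor
  · intro hOM A hA D hDA hD hmax
    -- D^⊥⊥ ⊆ A since A orthoclosed
    have hDDA : ortho perp (ortho perp D) ⊆ A := by
      rw [← hA]; exact ortho_anti perp (ortho_anti perp hDA)
    have hDDclosed : OrthoClosed perp (ortho perp (ortho perp D)) := by
      unfold OrthoClosed
      rw [ooo perp hsymm]
    have key := hOM (ortho perp (ortho perp D)) A hDDclosed hA hDDA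
    -- A ∩ D^⊥⊥⊥ = A ∩ D^⊥ is empty
    have hempty : A ∩ ortho perp (ortho perp (ortho perp D)) = ∅ := by
      rw [ooo perp hsymm]
      ext e
      simp only [Set.mem_inter_iff, Set.mem_empty_iff_false, iff_false, not_and]
      intro heA heD
      have heD' : e ∉ D := fun h => hirr e (heD e h)
      have : insert e D = D := by
        apply hmax (insert e D) (Set.insert_subset heA hDA)
        · intro x hx y hy hxy
          rcases hx with rfl | hx
          · rcases hy with rfl | hy
            · exact absurd rfl hxy
            · exact heD y hy
          · rcases hy with rfl | hy
            · exact hsymm _ _ (heD x hx)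
            · exact hD hx hy hxy
        · exact Set.subset_insert e D
      exact heD' (this ▸ Set.mem_insert e D)
    rw [hempty, Set.union_empty, ooo perp hsymm] at key
    exact key
  · intro hDac A B hA hB hAB
    -- ⊇ direction:
    apply Set.Subset.antisymm
    · -- get maximal D in A, extend to maximal E in B
      obtain ⟨D, -, hDA, hD, hDmax⟩ :=
        exists_max_orth perp A ∅ (Set.empty_subset A) (Set.pairwise_empty perp)
      obtain ⟨E, hDE, hEB, hE, hEmax⟩ := exists_max_orth perp B D (hDA.trans hAB) hD
      have hAeq : A = ortho perp (ortho perp D) := hDac A hA D hDA hD hDmax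
      have hBeq : B = ortho perp (ortho perp E) := hDac B hB E hEB hE hEmax
      have hEsub : E ⊆ A ∪ B ∩ ortho perp A := by
        intro e he
        by_cases heD : e ∈ D
        · exact Or.inl (hDA heD)
        · refine Or.inr ⟨hEB he, ?_⟩
          have heDp : e ∈ ortho perp D := fun d hd =>
            hE he (hDE hd) (fun h => heD (h ▸ hd))
          rw [hAeq]
          intro a ha
          exact hsymm _ _ (ha e heDp)
      calc B = ortho perp (ortho perp E) := hBeq
        _ ⊆ ortho perp (ortho perp (A ∪ B ∩ ortho perp A)) :=
          ortho_anti perp (ortho_anti perp hEsub)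
    · have : A ∪ B ∩ ortho perp A ⊆ B :=
        Set.union_subset hAB Set.inter_subset_left
      calc ortho perp (ortho perp (A ∪ B ∩ ortho perp A))
          ⊆ ortho perp (ortho perp B) := ortho_anti perp (ortho_anti perp this)
        _ = B := hB
end

section
/- Let (X,⊥) be an irredundant orthogonality space of finite rank satisfying condition (L1). Then the lattice C(X,⊥) is modular; concretely, for all orthoclosed sets A, B, C ⊆ X with A ⊆ C one has (A ∪ (B ∩ C))^⊥⊥ = (A ∪ B)^⊥⊥ ∩ C. -/
variable {X : Type*}

namespace Stmt7Aux

variable {perp : X → X → Prop}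

/-- Double orthocomplement (closure). -/
def cl (perp : X → X → Prop) (A : Set X) : Set X := ortho perp (ortho perp A)

lemma mem_ortho {A : Set X} {x : X} : x ∈ ortho perp A ↔ ∀ a ∈ A, perp x a := Iff.rfl

lemma ortho_anti {A B : Set X} (h : A ⊆ B) : ortho perp B ⊆ ortho perp A :=
  fun _ hx a ha => hx a (h ha)

lemma mem_ortho_insert {A : Set X} {x a : X} :
    x ∈ ortho perp (insert a A) ↔ perp x a ∧ x ∈ ortho perp A := by
  simp [ortho]

lemma mem_ortho_pair {x e f : X} :
    x ∈ ortho perp ({e, f} : Set X) ↔ perp x e ∧ perp x f := by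
  simp [ortho]

lemma ortho_union (A B : Set X) :
    ortho perp (A ∪ B) = ortho perp A ∩ ortho perp B := by
  ext x; simp [ortho, or_imp, forall_and]

section Symm
variable (hsymm : ∀ x y : X, perp x y → perp y x)
include hsymm

lemma subset_cl (A : Set X) : A ⊆ cl perp A := fun a ha z hz => hsymm _ _ (hz a ha)

lemma ortho_cl (A : Set X) : ortho perp (cl perp A) = ortho perp A :=
  Set.Subset.antisymm (ortho_anti (subset_cl hsymm A)) (subset_cl hsymm (ortho perp A))

omit hsymm in
lemma cl_mono {A B : Set X} (h : A ⊆ B) : cl perp A ⊆ cl perp B :=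
  ortho_anti (ortho_anti h)

lemma cl_cl (A : Set X) : cl perp (cl perp A) = cl perp A := by
  show ortho perp (ortho perp (cl perp A)) = cl perp A
  rw [ortho_cl hsymm]; rfl

omit hsymm in
lemma cl_subset_closed {A B : Set X} (h : A ⊆ B) (hB : cl perp B = B) :
    cl perp A ⊆ B := hB ▸ cl_mono h

lemma cl_ortho (A : Set X) : cl perp (ortho perp A) = ortho perp A := by
  show ortho perp (ortho perp (ortho perp A)) = ortho perp A
  show ortho perp (cl perp A) = ortho perp A
  exact ortho_cl hsymm A

lemma cl_inter_closed {A B : Set X} (hA : cl perp A = A) (hB : cl perp B = B) :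
    cl perp (A ∩ B) = A ∩ B := by
  apply Set.Subset.antisymm
  · exact Set.subset_inter
      (cl_subset_closed Set.inter_subset_left hA)
      (cl_subset_closed Set.inter_subset_right hB)
  · exact subset_cl hsymm _

lemma ortho_insert_cl (a : X) (A : Set X) :
    ortho perp (insert a (cl perp A)) = ortho perp (insert a A) := by
  ext x
  rw [mem_ortho_insert, mem_ortho_insert, ortho_cl hsymm]

lemma cl_univ : cl perp (Set.univ : Set X) = Set.univ :=
  Set.Subset.antisymm (Set.subset_univ _) (subset_cl hsymm _)

lemma ortho_eq_of_cl_eq {A B : Set X} (h : cl perp A = cl perp B) :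
    ortho perp A = ortho perp B := by
  rw [← ortho_cl hsymm A, ← ortho_cl hsymm B, h]

omit hsymm in
lemma cl_eq_of_ortho_eq {A B : Set X} (h : ortho perp A = ortho perp B) :
    cl perp A = cl perp B := by
  show ortho perp (ortho perp A) = ortho perp (ortho perp B)
  rw [h]

end Symm

section Key

variable (hsymm : ∀ x y : X, perp x y → perp y x)
    (hirr : ∀ x : X, ¬ perp x x)
    (hL1 : ∀ e f : X, f ≠ e → ∃ g : X, perp g e ∧ ortho perp {e, g} = ortho perp {e, f})
include hsymm hirr hL1

/-- Key uniqueness lemma: if `h ⊥ D` and `g ⊥ D` and `g ∈ cl (D ∪ {h})` then `g = h`. -/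
lemma key_unique (D : Set X) (h g : X)
    (hhD : ∀ d ∈ D, perp h d) (hgD : ∀ d ∈ D, perp g d)
    (hg : g ∈ cl perp (insert h D)) : g = h := by
  by_contra hne
  obtain ⟨k, hkh, hk⟩ := hL1 h g hne
  have hkD : ∀ d ∈ D, perp k d := by
    intro d hd
    have hd1 : d ∈ ortho perp ({h, g} : Set X) :=
      mem_ortho_pair.2 ⟨hsymm _ _ (hhD d hd), hsymm _ _ (hgD d hd)⟩
    rw [← hk] at hd1
    exact hsymm _ _ (mem_ortho_pair.1 hd1).2
  have hkmem : k ∈ ortho perp (insert h D) := by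
    rw [mem_ortho_insert]
    exact ⟨hkh, fun d hd => hkD d hd⟩
  have hgk : perp g k := hg k hkmem
  have : k ∈ ortho perp ({h, g} : Set X) := mem_ortho_pair.2 ⟨hkh, hsymm _ _ hgk⟩
  rw [← hk] at this
  exact hirr k (mem_ortho_pair.1 this).2

omit hirr in
/-- Key reduction lemma: if `e ⊥ D`, `y ∈ cl (D ∪ {e})` and `y ⊥ e`, then `y ∈ cl D`. -/
lemma key_reduce (D : Set X) (e y : X)
    (heD : ∀ d ∈ D, perp e d) (hy : y ∈ cl perp (insert e D)) (hye : perp y e) :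
    y ∈ cl perp D := by
  intro z hz
  by_cases hez : z = e
  · subst hez; exact hye
  obtain ⟨k, hke, hk⟩ := hL1 e z hez
  have hkD : ∀ d ∈ D, perp k d := by
    intro d hd
    have hd1 : d ∈ ortho perp ({e, z} : Set X) :=
      mem_ortho_pair.2 ⟨hsymm _ _ (heD d hd), hsymm _ _ (hz d hd)⟩
    rw [← hk] at hd1
    exact hsymm _ _ (mem_ortho_pair.1 hd1).2
  have hkmem : k ∈ ortho perp (insert e D) := by
    rw [mem_ortho_insert]; exact ⟨hke, fun d hd => hkD d hd⟩
  have hyk : perp y k := hy k hkmem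
  have : y ∈ ortho perp ({e, k} : Set X) := mem_ortho_pair.2 ⟨hye, hyk⟩
  rw [hk] at this
  exact (mem_ortho_pair.1 this).2

omit hirr in
lemma key_reduce_finset (S : Set X) (E : Finset X)
    (hES : ∀ e ∈ E, ∀ s ∈ S, perp e s) (hEE : (↑E : Set X).Pairwise perp) :
    ∀ y, y ∈ cl perp (S ∪ ↑E) → (∀ e ∈ E, perp y e) → y ∈ cl perp S := by
  classical
  induction E using Finset.induction_on with
  | empty => intro y hy _; simpa using hy
  | @insert a E ha ih =>
    intro y hy hyE
    have h1 : y ∈ cl perp (insert a (S ∪ ↑E)) := by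
      have : (S ∪ ↑(insert a E) : Set X) = insert a (S ∪ ↑E) := by
        simp [Set.union_insert]
      rwa [this] at hy
    have haSE : ∀ d ∈ S ∪ (↑E : Set X), perp a d := by
      intro d hd
      rcases hd with hd | hd
      · exact hES a (Finset.mem_insert_self a E) d hd
      · exact hEE (by simp) (by simp [hd]) (by rintro rfl; exact ha hd)
    have h2 : y ∈ cl perp (S ∪ ↑E) :=
      key_reduce hsymm hL1 _ a y haSE h1 (hyE a (Finset.mem_insert_self a E))
    exact ih (fun e he s hs => hES e (Finset.mem_insert_of_mem he) s hs)
      (hEE.mono (by simp [Set.subset_insert])) y h2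
      (fun e he => hyE e (Finset.mem_insert_of_mem he))

omit hirr in
/-- Lemma A: orthogonal extension. -/
lemma extend_orth :
    ∀ (D : Finset X), (↑D : Set X).Pairwise perp → ∀ f, f ∉ cl perp ↑D →
    ∃ g, (∀ d ∈ D, perp g d) ∧
      ortho perp (insert g (↑D : Set X)) = ortho perp (insert f ↑D) := by
  classical
  intro D
  induction D using Finset.induction_on with
  | empty => intro _ f _; exact ⟨f, by simp, rfl⟩
  | @insert e D he ih =>
    intro hpair f hf
    have hpairD : (↑D : Set X).Pairwise perp := hpair.mono (by simp [Set.subset_insert])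
    have hfD : f ∉ cl perp ↑D := fun hc => hf (cl_mono (by simp [Set.subset_insert]) hc)
    obtain ⟨g1, hg1D, horth1⟩ := ih hpairD f hfD
    have hcl1 : cl perp (insert g1 (↑D : Set X)) = cl perp (insert f ↑D) :=
      cl_eq_of_ortho_eq horth1
    have hg1e : g1 ≠ e := by
      rintro rfl
      apply hf
      have : f ∈ cl perp (insert f (↑D : Set X)) := subset_cl hsymm _ (by simp)
      rw [← hcl1] at this
      exact cl_mono (by intro x hx; simp at hx ⊢; tauto) this
    obtain ⟨k, hke, hk⟩ := hL1 e g1 hg1e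
    have hkD : ∀ d ∈ D, perp k d := by
      intro d hd
      have hde : perp d e := hpair (by simp [hd]) (by simp)
        (by rintro rfl; exact he hd)
      have hd1 : d ∈ ortho perp ({e, g1} : Set X) :=
        mem_ortho_pair.2 ⟨hde, hsymm _ _ (hg1D d hd)⟩
      rw [← hk] at hd1
      exact hsymm _ _ (mem_ortho_pair.1 hd1).2
    refine ⟨k, ?_, ?_⟩
    · intro d hd
      rcases Finset.mem_insert.1 hd with rfl | hd
      · exact hke
      · exact hkD d hd
    · ext x
      have hkx := Set.ext_iff.1 hk x
      have h1x := Set.ext_iff.1 horth1 x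
      rw [mem_ortho_pair, mem_ortho_pair] at hkx
      rw [mem_ortho_insert] at h1x
      rw [mem_ortho_insert] at h1x
      simp only [Finset.coe_insert, mem_ortho_insert]
      constructor
      · rintro ⟨hxk, hxe, hxD⟩
        have hxg1 : perp x g1 := (hkx.1 ⟨hxe, hxk⟩).2
        exact ⟨(h1x.1 ⟨hxg1, hxD⟩).1, hxe, hxD⟩
      · rintro ⟨hxf, hxe, hxD⟩
        have hxg1 : perp x g1 := (h1x.2 ⟨hxf, hxD⟩).1
        exact ⟨(hkx.2 ⟨hxe, hxg1⟩).2, hxe, hxD⟩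

end Key

section Rank

variable (hsymm : ∀ x y : X, perp x y → perp y x)
    (hirr : ∀ x : X, ¬ perp x x)
    (hL1 : ∀ e f : X, f ≠ e → ∃ g : X, perp g e ∧ ortho perp {e, g} = ortho perp {e, f})
    {m : ℕ}
    (hrk : ∀ D : Finset X, (D : Set X).Pairwise perp → D.card ≤ m)
include hsymm hirr hL1 hrk

lemma exists_basis_ext (A : Set X) (hA : cl perp A = A)
    (D0 : Finset X) (hD0A : ↑D0 ⊆ A) (hD0 : (↑D0 : Set X).Pairwise perp) :
    ∃ D : Finset X, D0 ⊆ D ∧ ↑D ⊆ A ∧ (↑D : Set X).Pairwise perp ∧ cl perp ↑D = A := by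
  classical
  set P : ℕ → Prop := fun n => ∃ D : Finset X,
    D0 ⊆ D ∧ ↑D ⊆ A ∧ (↑D : Set X).Pairwise perp ∧ D.card = n with hPdef
  have hbound : ∀ n, P n → n ≤ m := by rintro n ⟨D, _, _, hp, rfl⟩; exact hrk D hp
  have h0 : P D0.card := ⟨D0, le_refl _, hD0A, hD0, rfl⟩
  have hspec : P (Nat.findGreatest P m) := Nat.findGreatest_spec (hbound _ h0) h0
  obtain ⟨D, hD0D, hDA, hDp, hcard⟩ := hspec
  refine ⟨D, hD0D, hDA, hDp, ?_⟩
  have hsub : cl perp ↑D ⊆ A := cl_subset_closed hDA hA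
  apply Set.Subset.antisymm hsub
  by_contra hnot
  obtain ⟨f, hfA, hfD⟩ : ∃ f, f ∈ A ∧ f ∉ cl perp ↑D := Set.not_subset.1 hnot
  obtain ⟨g, hgD, horth⟩ := extend_orth hsymm hL1 D hDp f hfD
  have hgmem : g ∈ A := by
    have h1 : g ∈ cl perp (insert g (↑D : Set X)) := subset_cl hsymm _ (by simp)
    rw [cl_eq_of_ortho_eq horth] at h1
    refine cl_subset_closed ?_ hA h1
    intro x hx
    rcases hx with rfl | hx
    · exact hfA
    · exact hDA hx
  have hgnot : g ∉ D := fun hg => hirr g (hgD g hg)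
  have hpair' : (↑(insert g D) : Set X).Pairwise perp := by
    rw [Finset.coe_insert]
    rw [Set.pairwise_insert]
    refine ⟨hDp, fun b hb _ => ⟨hgD b hb, hsymm _ _ (hgD b hb)⟩⟩
  have hP1 : P (D.card + 1) := by
    refine ⟨insert g D, hD0D.trans (Finset.subset_insert g D), ?_, hpair', ?_⟩
    · rw [Finset.coe_insert]; exact Set.insert_subset hgmem hDA
    · rw [Finset.card_insert_of_notMem hgnot]
  have hle := Nat.le_findGreatest (hbound _ hP1) hP1
  omega

lemma exchange (A : Set X) (hA : cl perp A = A) (e f : X)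
    (he : e ∉ A) (hf : f ∉ A) (hfe : f ∈ cl perp (insert e A)) :
    e ∈ cl perp (insert f A) := by
  obtain ⟨Db, -, hDbA, hDbp, hDbcl⟩ :=
    exists_basis_ext hsymm hirr hL1 hrk A hA ∅ (by simp) (by simp)
  have heDb : e ∉ cl perp ↑Db := by rw [hDbcl]; exact he
  have hfDb : f ∉ cl perp ↑Db := by rw [hDbcl]; exact hf
  obtain ⟨g, hgDb, horthg⟩ := extend_orth hsymm hL1 Db hDbp e heDb
  obtain ⟨h, hhDb, horthh⟩ := extend_orth hsymm hL1 Db hDbp f hfDb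
  have hclA : ∀ x : X, cl perp (insert x A) = cl perp (insert x (↑Db : Set X)) := by
    intro x
    rw [← hDbcl]
    exact cl_eq_of_ortho_eq (ortho_insert_cl hsymm x ↑Db)
  have hfe' : f ∈ cl perp (insert e (↑Db : Set X)) := by rw [← hclA e]; exact hfe
  have hsubfe : cl perp (insert f (↑Db : Set X)) ⊆ cl perp (insert e ↑Db) := by
    refine cl_subset_closed ?_ (cl_cl hsymm _)
    intro x hx
    rcases hx with rfl | hx
    · exact hfe'
    · exact subset_cl hsymm _ (Set.mem_insert_of_mem _ hx)
  have hh_in : h ∈ cl perp (insert g (↑Db : Set X)) := by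
    have h1 : h ∈ cl perp (insert h (↑Db : Set X)) := subset_cl hsymm _ (by simp)
    rw [cl_eq_of_ortho_eq horthh] at h1
    have h2 := hsubfe h1
    rwa [← cl_eq_of_ortho_eq horthg] at h2
  have hgh : h = g := key_unique hsymm hirr hL1 ↑Db g h
    (fun d hd => hgDb d hd) (fun d hd => hhDb d hd) hh_in
  have he1 : e ∈ cl perp (insert e (↑Db : Set X)) := subset_cl hsymm _ (by simp)
  rw [← cl_eq_of_ortho_eq horthg, ← hgh, cl_eq_of_ortho_eq horthh, ← hclA f] at he1
  exact he1

lemma steinitz_aux [DecidableEq X] :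
    ∀ (n : ℕ) (E D : Finset X), (E \ D).card ≤ n → (↑E : Set X).Pairwise perp →
      ↑E ⊆ cl perp ↑D → E.card ≤ D.card := by
  classical
  intro n
  induction n with
  | zero =>
    intro E D hc _ _
    have hsub : E ⊆ D := by
      rw [Nat.le_zero, Finset.card_eq_zero, Finset.sdiff_eq_empty_iff_subset] at hc
      exact hc
    exact Finset.card_le_card hsub
  | succ n ih =>
    intro E D hc hEp hED
    by_cases hsub : E ⊆ D
    · exact Finset.card_le_card hsub
    obtain ⟨e, heE, heD⟩ := Finset.not_subset.1 hsub
    set Fam := D.powerset.filter (fun F => (D ∩ E) ⊆ F ∧ e ∈ cl perp ↑F) with hFam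
    have hDin : D ∈ Fam := by
      simp only [hFam, Finset.mem_filter, Finset.mem_powerset]
      exact ⟨Finset.Subset.refl D, Finset.inter_subset_left, hED heE⟩
    obtain ⟨F, hFFam, hFmin⟩ := Fam.exists_min_image Finset.card ⟨D, hDin⟩
    simp only [hFam, Finset.mem_filter, Finset.mem_powerset] at hFFam
    obtain ⟨hFD, hDEF, heF⟩ := hFFam
    have heFnot : e ∉ F := fun hx => heD (hFD hx)
    obtain ⟨d, hdF, hdE⟩ : ∃ d, d ∈ F ∧ d ∉ E := by
      by_contra hcon
      push_neg at hcon
      have heo : e ∈ ortho perp (↑F : Set X) := by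
        intro a ha
        have haE : a ∈ E := hcon a ha
        exact hEp (by exact_mod_cast heE) (by exact_mod_cast haE)
          (fun hq => heFnot (hq ▸ ha))
      exact hirr e (heF e heo)
    set F' := F.erase d with hF'
    have hF'F : F' ⊆ F := Finset.erase_subset d F
    have hFins : (↑F : Set X) = insert d ↑F' := by
      rw [hF', Finset.coe_erase]
      rw [Set.insert_diff_singleton]
      exact (Set.insert_eq_of_mem (by exact_mod_cast hdF)).symm
    have heF' : e ∉ cl perp ↑F' := by
      intro hcon
      have hmem : F' ∈ Fam := by
        simp only [hFam, Finset.mem_filter, Finset.mem_powerset]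
        refine ⟨hF'F.trans hFD, ?_, hcon⟩
        intro x hx
        have hxF : x ∈ F := hDEF hx
        have hxd : x ≠ d := fun hq => hdE (hq ▸ (Finset.mem_inter.1 hx).2)
        exact Finset.mem_erase.2 ⟨hxd, hxF⟩
      have := hFmin F' hmem
      have hlt : F'.card < F.card := Finset.card_erase_lt_of_mem hdF
      omega
    have hdF' : d ∉ cl perp ↑F' := by
      intro hcon
      apply heF'
      have hsub2 : cl perp ↑F ⊆ cl perp ↑F' := by
        rw [hFins]
        refine cl_subset_closed ?_ (cl_cl hsymm _)
        intro x hx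
        rcases hx with rfl | hx
        · exact hcon
        · exact subset_cl hsymm _ hx
      exact hsub2 heF
    have heclF : e ∈ cl perp (insert d (cl perp ↑F')) := by
      rw [cl_eq_of_ortho_eq (ortho_insert_cl hsymm d ↑F'), ← hFins]
      exact heF
    have hdcl : d ∈ cl perp (insert e (cl perp ↑F')) :=
      exchange hsymm hirr hL1 hrk (cl perp ↑F') (cl_cl hsymm _) d e hdF' heF' heclF
    have hdcl2 : d ∈ cl perp (insert e (↑F' : Set X)) := by
      rwa [cl_eq_of_ortho_eq (ortho_insert_cl hsymm e ↑F')] at hdcl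
    set D' := insert e (D.erase d) with hD'
    have hdD : d ∈ D := hFD hdF
    have hcardD' : D'.card ≤ D.card := by
      have h1 : D'.card ≤ (D.erase d).card + 1 := by
        rw [hD']; exact Finset.card_insert_le e (D.erase d)
      have h2 : (D.erase d).card = D.card - 1 := Finset.card_erase_of_mem hdD
      have h3 : 1 ≤ D.card := Finset.card_pos.2 ⟨d, hdD⟩
      omega
    have hDsub : (↑D : Set X) ⊆ cl perp ↑D' := by
      intro x hx
      by_cases hxd : x = d
      · rw [hxd]
        refine cl_mono ?_ hdcl2
        intro y hy
        rcases hy with rfl | hy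
        · exact_mod_cast Finset.mem_insert_self y _
        · have hyF' : y ∈ F.erase d := by exact_mod_cast hy
          obtain ⟨hyd, hyF⟩ := Finset.mem_erase.1 hyF'
          have hyD : y ∈ D.erase d := Finset.mem_erase.2 ⟨hyd, hFD hyF⟩
          exact_mod_cast Finset.mem_insert_of_mem hyD
      · refine subset_cl hsymm _ ?_
        have : x ∈ D := by exact_mod_cast hx
        exact_mod_cast Finset.mem_insert_of_mem (Finset.mem_erase.2 ⟨hxd, this⟩)
    have hED' : (↑E : Set X) ⊆ cl perp ↑D' := by
      refine hED.trans ?_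
      refine cl_subset_closed hDsub (cl_cl hsymm _)
    have hcard' : (E \ D').card ≤ n := by
      have hsub3 : E \ D' ⊆ (E \ D).erase e := by
        intro x hx
        obtain ⟨hxE, hxD'⟩ := Finset.mem_sdiff.1 hx
        have hxe : x ≠ e := fun hq => hxD' (hq ▸ Finset.mem_insert_self e _)
        have hxd : x ≠ d := fun hq => hdE (hq ▸ hxE)
        have hxD : x ∉ D := by
          intro hxDmem
          exact hxD' (Finset.mem_insert_of_mem (Finset.mem_erase.2 ⟨hxd, hxDmem⟩))
        exact Finset.mem_erase.2 ⟨hxe, Finset.mem_sdiff.2 ⟨hxE, hxD⟩⟩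
      have h4 := Finset.card_le_card hsub3
      have h5 : e ∈ E \ D := Finset.mem_sdiff.2 ⟨heE, heD⟩
      have h6 : ((E \ D).erase e).card = (E \ D).card - 1 := Finset.card_erase_of_mem h5
      have h7 : 1 ≤ (E \ D).card := Finset.card_pos.2 ⟨e, h5⟩
      omega
    exact le_trans (ih E D' hcard' hEp hED') hcardD'

lemma steinitz [DecidableEq X] (E D : Finset X) (hEp : (↑E : Set X).Pairwise perp)
    (hED : ↑E ⊆ cl perp ↑D) : E.card ≤ D.card :=
  steinitz_aux hsymm hirr hL1 hrk (E \ D).card E D (le_refl _) hEp hED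

end Rank

/-- Dimension of a subset: largest cardinality of a pairwise orthogonal finite subset. -/
noncomputable def rho (perp : X → X → Prop) (m : ℕ) (A : Set X) : ℕ :=
  @Nat.findGreatest
    (fun n => ∃ D : Finset X, ↑D ⊆ A ∧ (↑D : Set X).Pairwise perp ∧ D.card = n)
    (Classical.decPred _) m

lemma rho_spec (m : ℕ) (A : Set X) :
    ∃ D : Finset X, ↑D ⊆ A ∧ (↑D : Set X).Pairwise perp ∧ D.card = rho perp m A := by
  classical
  have h0 : ∃ D : Finset X, ↑D ⊆ A ∧ (↑D : Set X).Pairwise perp ∧ D.card = 0 :=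
    ⟨∅, by simp, by simp, rfl⟩
  have hres := Nat.findGreatest_spec
    (P := fun n => ∃ D : Finset X, (↑D : Set X) ⊆ A ∧ (↑D : Set X).Pairwise perp ∧ D.card = n)
    (n := m) (Nat.zero_le m) h0
  exact hres

section Dim

variable (hsymm : ∀ x y : X, perp x y → perp y x)
    (hirr : ∀ x : X, ¬ perp x x)
    (hL1 : ∀ e f : X, f ≠ e → ∃ g : X, perp g e ∧ ortho perp {e, g} = ortho perp {e, f})
    {m : ℕ}
    (hrk : ∀ D : Finset X, (D : Set X).Pairwise perp → D.card ≤ m)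
include hsymm hirr hL1 hrk

omit hsymm hirr hL1 in
lemma rho_ge (A : Set X) (D : Finset X) (hDA : ↑D ⊆ A)
    (hDp : (↑D : Set X).Pairwise perp) : D.card ≤ rho perp m A := by
  classical
  exact Nat.le_findGreatest
    (P := fun n => ∃ D : Finset X, (↑D : Set X) ⊆ A ∧ (↑D : Set X).Pairwise perp ∧ D.card = n)
    (n := m) (hrk D hDp) ⟨D, hDA, hDp, rfl⟩

lemma rho_le (A : Set X) (D : Finset X) (hD : A ⊆ cl perp ↑D) :
    rho perp m A ≤ D.card := by
  classical
  obtain ⟨D', hD'A, hD'p, hcard⟩ := rho_spec (perp := perp) m A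
  rw [← hcard]
  exact steinitz hsymm hirr hL1 hrk D' D hD'p (fun x hx => hD (hD'A hx))

lemma rho_basis (D : Finset X) (hDp : (↑D : Set X).Pairwise perp) :
    rho perp m (cl perp ↑D) = D.card :=
  le_antisymm (rho_le hsymm hirr hL1 hrk _ D (le_refl _))
    (rho_ge hrk _ D (subset_cl hsymm _) hDp)

lemma closed_eq_of_rho_eq (M N : Set X) (hM : cl perp M = M) (hN : cl perp N = N)
    (hMN : M ⊆ N) (hrho : rho perp m M = rho perp m N) : M = N := by
  classical
  by_contra hne
  obtain ⟨f, hfN, hfM⟩ : ∃ f, f ∈ N ∧ f ∉ M :=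
    Set.not_subset.1 (fun h => hne (Set.Subset.antisymm hMN h))
  obtain ⟨D, -, hDM, hDp, hDcl⟩ :=
    exists_basis_ext hsymm hirr hL1 hrk M hM ∅ (by simp) (by simp)
  have hfD : f ∉ cl perp ↑D := by rw [hDcl]; exact hfM
  obtain ⟨g, hgD, horth⟩ := extend_orth hsymm hL1 D hDp f hfD
  have hgN : g ∈ N := by
    have h1 : g ∈ cl perp (insert g (↑D : Set X)) := subset_cl hsymm _ (by simp)
    rw [cl_eq_of_ortho_eq horth] at h1
    refine cl_subset_closed ?_ hN h1
    intro x hx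
    rcases hx with rfl | hx
    · exact hfN
    · exact hMN (hDM hx)
  have hgnot : g ∉ D := fun hg => hirr g (hgD g hg)
  have hpair' : (↑(insert g D) : Set X).Pairwise perp := by
    rw [Finset.coe_insert, Set.pairwise_insert]
    exact ⟨hDp, fun b hb _ => ⟨hgD b hb, hsymm _ _ (hgD b hb)⟩⟩
  have hge : (insert g D).card ≤ rho perp m N := by
    refine rho_ge hrk N (insert g D) ?_ hpair'
    rw [Finset.coe_insert]
    exact Set.insert_subset hgN (fun x hx => hMN (hDM hx))
  have hMrho : rho perp m M = D.card := by
    rw [← hDcl]; exact rho_basis hsymm hirr hL1 hrk D hDp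
  rw [Finset.card_insert_of_notMem hgnot] at hge
  omega

lemma rho_submodular (A B : Set X) (hA : cl perp A = A) (hB : cl perp B = B) :
    rho perp m (cl perp (A ∪ B)) + rho perp m (A ∩ B) ≤
      rho perp m A + rho perp m B := by
  classical
  obtain ⟨D, -, hDsub, hDp, hDcl⟩ := exists_basis_ext hsymm hirr hL1 hrk (A ∩ B)
    (cl_inter_closed hsymm hA hB) ∅ (by simp) (by simp)
  obtain ⟨GA, hDGA, hGAsub, hGAp, hGAcl⟩ := exists_basis_ext hsymm hirr hL1 hrk A hA D
    (hDsub.trans Set.inter_subset_left) hDp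
  obtain ⟨GB, hDGB, hGBsub, hGBp, hGBcl⟩ := exists_basis_ext hsymm hirr hL1 hrk B hB D
    (hDsub.trans Set.inter_subset_right) hDp
  have hrA : rho perp m A = GA.card := by
    rw [← hGAcl]; exact rho_basis hsymm hirr hL1 hrk GA hGAp
  have hrB : rho perp m B = GB.card := by
    rw [← hGBcl]; exact rho_basis hsymm hirr hL1 hrk GB hGBp
  have hrD : rho perp m (A ∩ B) = D.card := by
    rw [← hDcl]; exact rho_basis hsymm hirr hL1 hrk D hDp
  have hUnion : cl perp (A ∪ B) ⊆ cl perp ↑(GA ∪ GB) := by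
    apply le_of_eq
    apply cl_eq_of_ortho_eq
    rw [Finset.coe_union, ortho_union, ortho_union, ← hGAcl, ← hGBcl,
      ortho_cl hsymm, ortho_cl hsymm]
  have h1 : rho perp m (cl perp (A ∪ B)) ≤ (GA ∪ GB).card :=
    rho_le hsymm hirr hL1 hrk _ (GA ∪ GB) hUnion
  have h2 : D.card ≤ (GA ∩ GB).card :=
    Finset.card_le_card (Finset.subset_inter hDGA hDGB)
  have h3 := Finset.card_union_add_card_inter GA GB
  omega

lemma rho_compl (A : Set X) (hA : cl perp A = A)
    (hm : ∃ Dm : Finset X, Dm.card = m ∧ (↑Dm : Set X).Pairwise perp) :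
    rho perp m A + rho perp m (ortho perp A) = m := by
  classical
  obtain ⟨D, -, hDA, hDp, hDcl⟩ :=
    exists_basis_ext hsymm hirr hL1 hrk A hA ∅ (by simp) (by simp)
  obtain ⟨G, hDG, -, hGp, hGcl⟩ := exists_basis_ext hsymm hirr hL1 hrk Set.univ
    (cl_univ hsymm) D (Set.subset_univ _) hDp
  set E := G \ D with hE
  have hGcard : G.card = m := by
    obtain ⟨Dm, hDmcard, hDmp⟩ := hm
    have h1 : Dm.card ≤ G.card := steinitz hsymm hirr hL1 hrk Dm G hDmp
      (by rw [hGcl]; exact Set.subset_univ _)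
    have h2 : G.card ≤ m := hrk G hGp
    omega
  have hEp : (↑E : Set X).Pairwise perp := by
    refine hGp.mono ?_
    exact_mod_cast Finset.sdiff_subset
  have hDUE : (↑D : Set X) ∪ ↑E = ↑G := by
    rw [← Finset.coe_union, Finset.union_sdiff_of_subset hDG]
  have hEA : (↑E : Set X) ⊆ ortho perp A := by
    intro x hx
    have hxE : x ∈ E := by exact_mod_cast hx
    obtain ⟨hxG, hxD⟩ := Finset.mem_sdiff.1 hxE
    rw [← hDcl, ortho_cl hsymm]
    intro a ha
    have haD : a ∈ D := by exact_mod_cast ha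
    exact hGp (by exact_mod_cast hxG) (by exact_mod_cast hDG haD)
      (fun hq => hxD (hq ▸ haD))
  have hclE : cl perp ↑E = ortho perp A := by
    apply Set.Subset.antisymm (cl_subset_closed hEA (cl_ortho hsymm A))
    intro x hxoA
    intro z hz
    have hzD : z ∈ cl perp ↑D := by
      refine key_reduce_finset hsymm hL1 (↑D) E ?_ hEp z ?_ ?_
      · intro e he s hs
        have heE : e ∈ E := he
        obtain ⟨heG, heD⟩ := Finset.mem_sdiff.1 heE
        have hsD : s ∈ D := by exact_mod_cast hs
        exact hGp (by exact_mod_cast heG) (by exact_mod_cast hDG hsD)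
          (fun hq => heD (hq ▸ hsD))
      · rw [hDUE, hGcl]; trivial
      · intro e he
        exact hz e (by exact_mod_cast he)
    have hzA : z ∈ A := by rw [← hDcl]; exact hzD
    exact hxoA z hzA
  have hrE : rho perp m (ortho perp A) = E.card := by
    rw [← hclE]; exact rho_basis hsymm hirr hL1 hrk E hEp
  have hrA : rho perp m A = D.card := by
    rw [← hDcl]; exact rho_basis hsymm hirr hL1 hrk D hDp
  have hEcard : E.card = G.card - D.card := Finset.card_sdiff_of_subset hDG
  have hDle : D.card ≤ G.card := Finset.card_le_card hDG
  omega

lemma rho_modular (A B : Set X) (hA : cl perp A = A) (hB : cl perp B = B)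
    (hm : ∃ Dm : Finset X, Dm.card = m ∧ (↑Dm : Set X).Pairwise perp) :
    rho perp m (cl perp (A ∪ B)) + rho perp m (A ∩ B) =
      rho perp m A + rho perp m B := by
  have hA' : ortho perp (ortho perp A) = A := hA
  have hB' : ortho perp (ortho perp B) = B := hB
  have h1 := rho_submodular hsymm hirr hL1 hrk A B hA hB
  have h2 := rho_submodular hsymm hirr hL1 hrk (ortho perp A) (ortho perp B)
    (cl_ortho hsymm A) (cl_ortho hsymm B)
  have e1 : ortho perp A ∩ ortho perp B = ortho perp (cl perp (A ∪ B)) := by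
    rw [ortho_cl hsymm, ortho_union]
  have e2 : cl perp (ortho perp A ∪ ortho perp B) = ortho perp (A ∩ B) := by
    show ortho perp (ortho perp (ortho perp A ∪ ortho perp B)) = ortho perp (A ∩ B)
    rw [ortho_union, hA', hB']
  rw [e1, e2] at h2
  have c1 := rho_compl hsymm hirr hL1 hrk (A ∩ B) (cl_inter_closed hsymm hA hB) hm
  have c2 := rho_compl hsymm hirr hL1 hrk (cl perp (A ∪ B)) (cl_cl hsymm _) hm
  have cA := rho_compl hsymm hirr hL1 hrk A hA hm
  have cB := rho_compl hsymm hirr hL1 hrk B hB hm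
  omega

end Dim

end Stmt7Aux

open Stmt7Aux in
/-- In an irredundant orthogonality space of finite rank
satisfying (L₁), the ortholattice `C(X, ⊥)` is modular. -/
theorem stmt7 {X : Type*} [Nonempty X] (perp : X → X → Prop)
    (hsymm : ∀ x y : X, perp x y → perp y x)
    (hirr : ∀ x : X, ¬ perp x x)
    (hirred : Irredundant perp)
    (hrank : ∃ m : ℕ, 0 < m ∧ HasRank perp m)
    (hL1 : CondL1 perp) :
    ∀ A B C : Set X, OrthoClosed perp A → OrthoClosed perp B → OrthoClosed perp C →
      A ⊆ C →
      ortho perp (ortho perp (A ∪ (B ∩ C))) = ortho perp (ortho perp (A ∪ B)) ∩ C := by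
  classical
  intro A B C hA hB hC hAC
  obtain ⟨m, -, ⟨Dm, hDmcard, hDmp⟩, hrk⟩ := hrank
  have hm : ∃ Dm : Finset X, Dm.card = m ∧ (↑Dm : Set X).Pairwise perp := ⟨Dm, hDmcard, hDmp⟩
  have hL1' : ∀ e f : X, f ≠ e → ∃ g : X, perp g e ∧
      ortho perp {e, g} = ortho perp {e, f} := hL1
  have hA' : cl perp A = A := hA
  have hB' : cl perp B = B := hB
  have hC' : cl perp C = C := hC
  have hBC : cl perp (B ∩ C) = B ∩ C := cl_inter_closed hsymm hB' hC'
  have hclAB : cl perp (cl perp (A ∪ B)) = cl perp (A ∪ B) := cl_cl hsymm _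
  have hMN : cl perp (A ∪ B ∩ C) ⊆ cl perp (A ∪ B) ∩ C := by
    refine Set.subset_inter ?_ ?_
    · exact cl_mono (Set.union_subset_union_right A Set.inter_subset_left)
    · refine cl_subset_closed ?_ hC'
      exact Set.union_subset hAC Set.inter_subset_right
  have hNcl : cl perp (cl perp (A ∪ B) ∩ C) = cl perp (A ∪ B) ∩ C :=
    cl_inter_closed hsymm hclAB hC'
  have hMcl : cl perp (cl perp (A ∪ B ∩ C)) = cl perp (A ∪ B ∩ C) := cl_cl hsymm _
  have e1 := rho_modular hsymm hirr hL1' hrk A (B ∩ C) hA' hBC hm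
  have e2 := rho_modular hsymm hirr hL1' hrk B C hB' hC' hm
  have e3 := rho_modular hsymm hirr hL1' hrk (cl perp (A ∪ B)) C hclAB hC' hm
  have e4 := rho_modular hsymm hirr hL1' hrk A B hA' hB' hm
  have id1 : A ∩ (B ∩ C) = A ∩ B := by
    ext x
    constructor
    · rintro ⟨h1, h2, h3⟩; exact ⟨h1, h2⟩
    · rintro ⟨h1, h2⟩; exact ⟨h1, h2, hAC h1⟩
  have id2 : cl perp (cl perp (A ∪ B) ∪ C) = cl perp (B ∪ C) := by
    apply cl_eq_of_ortho_eq
    rw [ortho_union, ortho_cl hsymm, ortho_union, ortho_union]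
    ext x
    constructor
    · rintro ⟨⟨h1, h2⟩, h3⟩; exact ⟨h2, h3⟩
    · rintro ⟨h2, h3⟩
      exact ⟨⟨ortho_anti hAC h3, h2⟩, h3⟩
  rw [id1] at e1
  rw [id2] at e3
  have hrho : rho perp m (cl perp (A ∪ B ∩ C)) = rho perp m (cl perp (A ∪ B) ∩ C) := by
    omega
  exact closed_eq_of_rho_eq hsymm hirr hL1' hrk _ _ hMcl hNcl hMN hrho
end

section
/- Let (X,⊥) be an irredundant orthogonality space of finite rank satisfying condition (L1). Then C(X,⊥) has the covering property: for every orthoclosed set A ⊆ X and every e ∈ X with e ∉ A, there is no orthoclosed set B with A ⊊ B ⊊ (A ∪ {e})^⊥⊥. -/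
variable {X : Type*}

lemma ortho_pair_iff {perp : X → X → Prop} {d g z : X} :
    z ∈ ortho perp {d, g} ↔ perp z d ∧ perp z g := by
  simp [ortho]

lemma key_of_ortho_eq {perp : X → X → Prop} {d g f : X}
    (h : ortho perp {d, g} = ortho perp {d, f}) :
    ∀ z, perp z d → (perp z g ↔ perp z f) := by
  intro z hzd
  have h1 := Set.ext_iff.mp h z
  rw [ortho_pair_iff, ortho_pair_iff] at h1
  exact ⟨fun hg => (h1.mp ⟨hzd, hg⟩).2, fun hf => (h1.mpr ⟨hzd, hf⟩).2⟩

/-- Gram–Schmidt style lemma from (L₁), relative to an orthogonal context `E`. -/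
lemma gs (perp : X → X → Prop) (hsymm : ∀ x y : X, perp x y → perp y x)
    (hL1 : CondL1 perp) (D : Finset X) :
    (↑D : Set X).Pairwise perp →
    ∀ (E : Set X) (f : X), (∀ x ∈ E, ∀ y ∈ D, perp x y) → (∀ x ∈ E, perp f x) →
      (∀ z, (∀ x ∈ E, perp z x) → (∀ y ∈ D, perp z y) → perp z f) ∨
      ∃ g, (∀ x ∈ E, perp g x) ∧ (∀ y ∈ D, perp g y) ∧
        ∀ z, (∀ x ∈ E, perp z x) → (∀ y ∈ D, perp z y) → (perp z g ↔ perp z f) := by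
  classical
  induction D using Finset.induction_on with
  | empty =>
      intro _ E f _ hfE
      exact Or.inr ⟨f, hfE, by simp, fun z _ _ => Iff.rfl⟩
  | @insert d D' hd ih =>
      intro hpair E f hED hfE
      have hdD' : ∀ y ∈ D', perp d y := by
        intro y hy
        exact hpair (by simp) (by simp [hy]) (fun h => hd (h ▸ hy))
      have hpair' : (↑D' : Set X).Pairwise perp :=
        hpair.mono (by rw [Finset.coe_insert]; exact Set.subset_insert _ _)
      by_cases hfd : f = d
      · left
        intro z _ hzD
        subst hfd
        exact hzD f (Finset.mem_insert_self _ _)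
      · obtain ⟨g0, hg0d, horth⟩ := hL1 d f hfd
        have key := key_of_ortho_eq horth
        have hg0E : ∀ x ∈ E, perp g0 x := by
          intro x hx
          have hxd : perp x d := hED x hx d (Finset.mem_insert_self _ _)
          exact hsymm _ _ ((key x hxd).mpr (hsymm _ _ (hfE x hx)))
        have hED' : ∀ x ∈ insert d E, ∀ y ∈ D', perp x y := by
          intro x hx y hy
          rcases Set.mem_insert_iff.mp hx with rfl | hx
          · exact hdD' y hy
          · exact hED x hx y (Finset.mem_insert_of_mem hy)
        have hg0E' : ∀ x ∈ insert d E, perp g0 x := by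
          intro x hx
          rcases Set.mem_insert_iff.mp hx with rfl | hx
          · exact hg0d
          · exact hg0E x hx
        rcases ih hpair' (insert d E) g0 hED' hg0E' with hLc | ⟨g, hgE', hgD', hkey⟩
        · left
          intro z hzE hzD
          have hzd : perp z d := hzD d (Finset.mem_insert_self _ _)
          have hzE' : ∀ x ∈ insert d E, perp z x := by
            intro x hx
            rcases Set.mem_insert_iff.mp hx with rfl | hx
            · exact hzd
            · exact hzE x hx
          have hzD' : ∀ y ∈ D', perp z y := fun y hy => hzD y (Finset.mem_insert_of_mem hy)
          exact (key z hzd).mp (hLc z hzE' hzD')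
        · right
          refine ⟨g, fun x hx => hgE' x (Set.mem_insert_of_mem _ hx), ?_, ?_⟩
          · intro y hy
            rcases Finset.mem_insert.mp hy with rfl | hy
            · exact hgE' y (Set.mem_insert _ _)
            · exact hgD' y hy
          · intro z hzE hzD
            have hzd : perp z d := hzD d (Finset.mem_insert_self _ _)
            have hzE' : ∀ x ∈ insert d E, perp z x := by
              intro x hx
              rcases Set.mem_insert_iff.mp hx with rfl | hx
              · exact hzd
              · exact hzE x hx
            have hzD' : ∀ y ∈ D', perp z y := fun y hy => hzD y (Finset.mem_insert_of_mem hy)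
            exact (hkey z hzE' hzD').trans (key z hzd)

/-- Relative atoms: two elements orthogonal to `D` generating the same ray are equal. -/
lemma rel_atom (perp : X → X → Prop) (hsymm : ∀ x y : X, perp x y → perp y x)
    (hirr : ∀ x : X, ¬ perp x x) (hL1 : CondL1 perp)
    (D : Finset X) (g h : X) (hgD : ∀ y ∈ D, perp g y) (hhD : ∀ y ∈ D, perp h y)
    (hgh : ∀ z, (∀ y ∈ D, perp z y) → perp z h → perp z g) : g = h := by
  by_contra hne
  obtain ⟨k, hkh, hk⟩ := hL1 h g hne
  have key := key_of_ortho_eq hk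
  have hkD : ∀ y ∈ D, perp k y := by
    intro y hy
    exact hsymm _ _ ((key y (hsymm _ _ (hhD y hy))).mpr (hsymm _ _ (hgD y hy)))
  have hkg : perp k g := hgh k hkD hkh
  exact hirr k ((key k hkh).mpr hkg)

/-- Every orthoclosed set contains a maximal orthogonal subset whose
orthocomplement agrees with that of the set. -/
lemma exists_max_orth_s8 (perp : X → X → Prop) (hsymm : ∀ x y : X, perp x y → perp y x)
    (hirr : ∀ x : X, ¬ perp x x) (hL1 : CondL1 perp) {m : ℕ}
    (hbound : ∀ D : Finset X, (↑D : Set X).Pairwise perp → D.card ≤ m)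
    (A : Set X) (hA : OrthoClosed perp A) :
    ∃ D : Finset X, ↑D ⊆ A ∧ (↑D : Set X).Pairwise perp ∧
      ∀ a ∈ A, ∀ z, (∀ y ∈ D, perp z y) → perp a z := by
  classical
  set P : ℕ → Prop := fun n => ∃ D : Finset X,
    ↑D ⊆ A ∧ (↑D : Set X).Pairwise perp ∧ D.card = n with hPdef
  have hP0 : P 0 := ⟨∅, by simp, by simp, rfl⟩
  obtain ⟨D, hDA, hDp, hDc⟩ := Nat.findGreatest_spec (Nat.zero_le m) hP0
  refine ⟨D, hDA, hDp, ?_⟩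
  intro a ha
  by_contra hcon
  push_neg at hcon
  obtain ⟨z, hzD, hza⟩ := hcon
  rcases gs perp hsymm hL1 D hDp ∅ a (by simp) (by simp) with hLc | ⟨g, _, hgD, hkey⟩
  · exact hza (hsymm _ _ (hLc z (by simp) hzD))
  · have hgA : g ∈ A := by
      have hmem : g ∈ ortho perp (ortho perp A) := by
        intro w hw
        have hwD : ∀ y ∈ D, perp w y := fun y hy => hw y (hDA hy)
        exact hsymm _ _ ((hkey w (by simp) hwD).mpr (hw a ha))
      rwa [hA] at hmem
    have hgD' : g ∉ D := fun hg => hirr g (hgD g hg)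
    have hpair' : (↑(insert g D) : Set X).Pairwise perp := by
      rw [Finset.coe_insert]
      exact Set.pairwise_insert.mpr
        ⟨hDp, fun y hy _ => ⟨hgD y hy, hsymm _ _ (hgD y hy)⟩⟩
    have hPn : P (Nat.findGreatest P m + 1) := by
      refine ⟨insert g D, ?_, hpair', ?_⟩
      · rw [Finset.coe_insert]; exact Set.insert_subset_iff.mpr ⟨hgA, hDA⟩
      · rw [Finset.card_insert_of_notMem hgD', hDc]
    have hle : Nat.findGreatest P m + 1 ≤ m := by
      have := hbound _ hpair'
      rwa [Finset.card_insert_of_notMem hgD', hDc] at this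
    have := Nat.le_findGreatest hle hPn
    omega

/-- Exchange property. -/
lemma exchange (perp : X → X → Prop) (hsymm : ∀ x y : X, perp x y → perp y x)
    (hirr : ∀ x : X, ¬ perp x x) (hL1 : CondL1 perp) {m : ℕ}
    (hbound : ∀ D : Finset X, (↑D : Set X).Pairwise perp → D.card ≤ m)
    (A : Set X) (hA : OrthoClosed perp A) (e f : X)
    (hf : f ∈ ortho perp (ortho perp (A ∪ {e}))) (hfA : f ∉ A) :
    e ∈ ortho perp (ortho perp (A ∪ {f})) := by
  obtain ⟨D, hDA, hDp, hDperp⟩ := exists_max_orth_s8 perp hsymm hirr hL1 hbound A hA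
  have hf' : ∀ z, (∀ y ∈ D, perp z y) → perp z e → perp f z := by
    intro z hzD hze
    refine hf z ?_
    intro a ha
    rcases (Set.mem_union _ _ _).mp ha with ha | ha
    · exact hsymm _ _ (hDperp a ha z hzD)
    · rw [Set.mem_singleton_iff] at ha; subst ha; exact hze
  rcases gs perp hsymm hL1 D hDp ∅ e (by simp) (by simp) with hLe | ⟨h, _, hhD, hkeyh⟩
  · exfalso; apply hfA
    have hmem : f ∈ ortho perp (ortho perp A) := by
      intro w hw
      have hwD : ∀ y ∈ D, perp w y := fun y hy => hw y (hDA hy)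
      exact hf' w hwD (hLe w (by simp) hwD)
    rwa [hA] at hmem
  rcases gs perp hsymm hL1 D hDp ∅ f (by simp) (by simp) with hLf | ⟨g, _, hgD, hkeyg⟩
  · exfalso; apply hfA
    have hmem : f ∈ ortho perp (ortho perp A) := by
      intro w hw
      have hwD : ∀ y ∈ D, perp w y := fun y hy => hw y (hDA hy)
      exact hsymm _ _ (hLf w (by simp) hwD)
    rwa [hA] at hmem
  have hge : g = h := by
    refine rel_atom perp hsymm hirr hL1 D g h hgD hhD ?_
    intro z hzD hzh
    have hze : perp z e := (hkeyh z (by simp) hzD).mp hzh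
    exact (hkeyg z (by simp) hzD).mpr (hsymm _ _ (hf' z hzD hze))
  intro z hz
  have hzD : ∀ y ∈ D, perp z y := fun y hy => hz y (Set.mem_union_left _ (hDA hy))
  have hzf : perp z f := hz f (Set.mem_union_right _ rfl)
  have hzg : perp z g := (hkeyg z (by simp) hzD).mpr hzf
  have hzh : perp z h := hge ▸ hzg
  exact hsymm _ _ ((hkeyh z (by simp) hzD).mp hzh)

/-- In an irredundant orthogonality space of finite rank
satisfying (L₁), the ortholattice `C(X, ⊥)` has the covering property: for
orthoclosed `A` and `e ∉ A`, the join `(A ∪ {e})^⊥⊥` covers `A`. -/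
theorem stmt8 {X : Type*} [Nonempty X] (perp : X → X → Prop)
    (hsymm : ∀ x y : X, perp x y → perp y x)
    (hirr : ∀ x : X, ¬ perp x x)
    (hirred : Irredundant perp)
    (hrank : ∃ m : ℕ, 0 < m ∧ HasRank perp m)
    (hL1 : CondL1 perp) :
    ∀ (A : Set X), OrthoClosed perp A → ∀ e : X, e ∉ A →
      ¬ ∃ B : Set X, OrthoClosed perp B ∧ A ⊂ B ∧ B ⊂ ortho perp (ortho perp (A ∪ {e})) := by
  obtain ⟨m, -, -, hbound⟩ := hrank
  intro A hA e he
  rintro ⟨B, hB, hAB, hBE⟩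
  obtain ⟨f, hfB, hfA⟩ := Set.exists_of_ssubset hAB
  have hf : f ∈ ortho perp (ortho perp (A ∪ {e})) := hBE.subset hfB
  have hex := exchange perp hsymm hirr hL1 hbound A hA e f hf hfA
  have heB : e ∈ B := by
    have hsub : ortho perp (ortho perp (A ∪ {f})) ⊆ B := by
      rw [← hB]
      exact ortho_anti perp (ortho_anti perp
        (Set.union_subset hAB.subset (Set.singleton_subset_iff.mpr hfB)))
    exact hsub hex
  have hsub2 : ortho perp (ortho perp (A ∪ {e})) ⊆ B := by
    rw [← hB]
    exact ortho_anti perp (ortho_anti perp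
      (Set.union_subset hAB.subset (Set.singleton_subset_iff.mpr heB)))
  exact hBE.ne (Set.Subset.antisymm hBE.subset hsub2)
end

section
/- Let (X,⊥) be an irredundant orthogonality space of finite rank satisfying condition (L1). Then the following are equivalent: (1) (X,⊥) satisfies condition (L2); (2) for any e, f ∈ X with e ⊥ f, the set {e,f}^⊥⊥ contains an element distinct from both e and f; (3) (X,⊥) is irreducible, i.e., X cannot be written as the union of two disjoint non-empty subsets A and B such that a ⊥ b for all a ∈ A and b ∈ B. -/
variable {X : Type*}

set_option linter.unusedVariables false

section Stmt9AuxSec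

namespace Stmt9Aux

variable {perp : X → X → Prop}

lemma mem_ortho_iff {A : Set X} {x : X} : x ∈ ortho perp A ↔ ∀ a ∈ A, perp x a := Iff.rfl

lemma mem_ortho_pair_iff {e f x : X} : x ∈ ortho perp {e, f} ↔ perp x e ∧ perp x f := by
  simp [ortho]

lemma mem_ortho_insert_iff {x : X} {A : Set X} {z : X} :
    z ∈ ortho perp (insert x A) ↔ perp z x ∧ z ∈ ortho perp A := by
  simp [ortho]

lemma ortho_anti {A B : Set X} (h : A ⊆ B) : ortho perp B ⊆ ortho perp A :=
  fun _ hx a ha => hx a (h ha)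

lemma mem_oo_of_mem (hsymm : ∀ x y : X, perp x y → perp y x) {A : Set X} {x : X} (hx : x ∈ A) :
    x ∈ ortho perp (ortho perp A) := fun w hw => hsymm _ _ (hw x hx)

/-- Sub-lemma T : an element of the line through `e, g` (with `g ⊥ e`) which is
orthogonal to `e` coincides with `g`. -/
lemma lemT (hsymm : ∀ x y : X, perp x y → perp y x) (hirr : ∀ x : X, ¬ perp x x)
    (hL1 : CondL1 perp) {e g g' : X} (hge : perp g e) (hg'e : perp g' e)
    (hmem : g' ∈ ortho perp (ortho perp {e, g})) : g' = g := by
  by_contra hne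
  obtain ⟨h, hhg, heq⟩ := hL1 g g' hne
  have he_mem : e ∈ ortho perp {g, g'} :=
    mem_ortho_pair_iff.mpr ⟨hsymm _ _ hge, hsymm _ _ hg'e⟩
  have heh : perp e h := (mem_ortho_pair_iff.mp (heq ▸ he_mem)).2
  have hheg : h ∈ ortho perp ({e, g} : Set X) :=
    mem_ortho_pair_iff.mpr ⟨hsymm _ _ heh, hhg⟩
  have hg'h : perp g' h := hmem h hheg
  have : h ∈ ortho perp ({g, g'} : Set X) := mem_ortho_pair_iff.mpr ⟨hhg, hsymm _ _ hg'h⟩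
  have : h ∈ ortho perp ({g, h} : Set X) := heq ▸ this
  exact hirr h (mem_ortho_pair_iff.mp this).2

lemma lemW_aux (hsymm : ∀ x y : X, perp x y → perp y x) (hirr : ∀ x : X, ¬ perp x x)
    (hL1 : CondL1 perp) {a f : X} (haf : perp a f)
    (thin : ortho perp (ortho perp {a, f}) = {a, f})
    (W : Finset X) (hWsub : ∀ w ∈ W, w ∈ ortho perp ({a, f} : Set X))
    (hWmax : ∀ x, x ∈ ortho perp ({a, f} : Set X) → (∀ w ∈ W, perp x w) → False)
    {x : X} (hx : ∀ w ∈ W, perp x w) (hxa : ¬ perp x a) (hxea : x ≠ a) (hxef : x ≠ f) :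
    False := by
  obtain ⟨g, hga, heq⟩ := hL1 a x hxea
  -- g is orthogonal to every element of W
  have hgW : ∀ w ∈ W, perp g w := by
    intro w hw
    have hwax : w ∈ ortho perp ({a, x} : Set X) :=
      mem_ortho_pair_iff.mpr ⟨(mem_ortho_pair_iff.mp (hWsub w hw)).1, hsymm _ _ (hx w hw)⟩
    exact hsymm _ _ (mem_ortho_pair_iff.mp (heq ▸ hwax)).2
  by_cases hxf : perp x f
  · have hfax : f ∈ ortho perp ({a, x} : Set X) :=
      mem_ortho_pair_iff.mpr ⟨hsymm _ _ haf, hsymm _ _ hxf⟩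
    have hfg : perp f g := (mem_ortho_pair_iff.mp (heq ▸ hfax)).2
    exact hWmax g (mem_ortho_pair_iff.mpr ⟨hga, hsymm _ _ hfg⟩) hgW
  · have hgf : g ≠ f := by
      rintro rfl
      have : x ∈ ortho perp (ortho perp ({a, x} : Set X)) :=
        mem_oo_of_mem hsymm (by simp)
      rw [← heq, thin] at this
      rcases this with h | h
      · exact hxea h
      · exact hxef h
    obtain ⟨h, hhf, heq2⟩ := hL1 f g hgf
    have hafg : a ∈ ortho perp ({f, g} : Set X) :=
      mem_ortho_pair_iff.mpr ⟨haf, hsymm _ _ hga⟩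
    have hah : perp a h := (mem_ortho_pair_iff.mp (heq2 ▸ hafg)).2
    have hhW : ∀ w ∈ W, perp h w := by
      intro w hw
      have hwfg : w ∈ ortho perp ({f, g} : Set X) :=
        mem_ortho_pair_iff.mpr ⟨(mem_ortho_pair_iff.mp (hWsub w hw)).2, hsymm _ _ (hgW w hw)⟩
      exact hsymm _ _ (mem_ortho_pair_iff.mp (heq2 ▸ hwfg)).2
    exact hWmax h (mem_ortho_pair_iff.mpr ⟨hsymm _ _ hah, hhf⟩) hhW

/-- Lemma W: for a maximal orthogonal subset `W` of `{a,f}⊥`, where `{a,f}` is a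
thin orthogonal pair, `W⊥ = {a,f}`. -/
lemma lemW (hsymm : ∀ x y : X, perp x y → perp y x) (hirr : ∀ x : X, ¬ perp x x)
    (hL1 : CondL1 perp) {a f : X} (haf : perp a f)
    (thin : ortho perp (ortho perp {a, f}) = {a, f})
    (W : Finset X) (hWsub : ∀ w ∈ W, w ∈ ortho perp ({a, f} : Set X))
    (hWmax : ∀ x, x ∈ ortho perp ({a, f} : Set X) → (∀ w ∈ W, perp x w) → False)
    {x : X} (hx : ∀ w ∈ W, perp x w) : x = a ∨ x = f := by
  by_cases hxea : x = a
  · exact Or.inl hxea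
  by_cases hxef : x = f
  · exact Or.inr hxef
  exfalso
  by_cases hxa : perp x a
  · by_cases hxf : perp x f
    · exact hWmax x (mem_ortho_pair_iff.mpr ⟨hxa, hxf⟩) hx
    · -- symmetric case: swap roles of a and f
      have pc : ({f, a} : Set X) = {a, f} := Set.pair_comm f a
      refine lemW_aux hsymm hirr hL1 (hsymm _ _ haf) ?_ W ?_ ?_ hx hxf hxef hxea
      · rw [pc]; exact thin
      · intro w hw; rw [pc]; exact hWsub w hw
      · intro y hy hyW; exact hWmax y (by rwa [pc] at hy) hyW
  · exact lemW_aux hsymm hirr hL1 haf thin W hWsub hWmax hx hxa hxea hxef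

/-- Iterated projection: given a pairwise orthogonal finite set `W` and any `b`,
either there is `c ⊥ W` with `(W ∪ {c})⊥ = (W ∪ {b})⊥`, or `(W ∪ {b})⊥ = W⊥`. -/
lemma proj (hsymm : ∀ x y : X, perp x y → perp y x) (hL1 : CondL1 perp)
    (W : Finset X) (hWpair : (W : Set X).Pairwise perp) (b : X) :
    (∃ c, (∀ w ∈ W, perp c w) ∧
      ortho perp (insert c (W : Set X)) = ortho perp (insert b (W : Set X))) ∨
    ortho perp (insert b (W : Set X)) = ortho perp (W : Set X) := by
  classical
  induction W using Finset.induction_on with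
  | empty => exact Or.inl ⟨b, by simp, rfl⟩
  | @insert w V hwV ih =>
    have hVpair : (V : Set X).Pairwise perp := by
      refine hWpair.mono ?_
      simp only [Finset.coe_insert]
      exact Set.subset_insert _ _
    have hvw : ∀ v ∈ V, perp v w := by
      intro v hv
      refine hWpair ?_ ?_ ?_
      · simp [hv]
      · simp
      · rintro rfl; exact hwV hv
    rcases ih hVpair with ⟨c, hcV, hc⟩ | hV
    · by_cases hcw : c = w
      · subst hcw
        right
        ext z
        simp only [Finset.coe_insert, mem_ortho_insert_iff]
        constructor
        · rintro ⟨_, hz⟩; exact hz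
        · rintro ⟨hzw, hzV⟩
          have : z ∈ ortho perp (insert c (V : Set X)) := mem_ortho_insert_iff.mpr ⟨hzw, hzV⟩
          rw [hc] at this
          exact ⟨(mem_ortho_insert_iff.mp this).1, hzw, hzV⟩
      · obtain ⟨d, hdw, heq⟩ := hL1 w c hcw
        have hdV : ∀ v ∈ V, perp d v := by
          intro v hv
          have : v ∈ ortho perp ({w, c} : Set X) :=
            mem_ortho_pair_iff.mpr ⟨hvw v hv, hsymm _ _ (hcV v hv)⟩
          exact hsymm _ _ (mem_ortho_pair_iff.mp (heq ▸ this)).2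
        left
        refine ⟨d, ?_, ?_⟩
        · intro w' hw'
          rcases Finset.mem_insert.mp hw' with rfl | hw'
          · exact hdw
          · exact hdV w' hw'
        · ext z
          simp only [Finset.coe_insert, mem_ortho_insert_iff]
          constructor
          · rintro ⟨hzd, hzw, hzV⟩
            have hz1 : z ∈ ortho perp ({w, d} : Set X) := mem_ortho_pair_iff.mpr ⟨hzw, hzd⟩
            have hz2 : perp z c := (mem_ortho_pair_iff.mp (heq ▸ hz1)).2
            have hz3 : z ∈ ortho perp (insert c (V : Set X)) :=
              mem_ortho_insert_iff.mpr ⟨hz2, hzV⟩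
            rw [hc] at hz3
            exact ⟨(mem_ortho_insert_iff.mp hz3).1, hzw, hzV⟩
          · rintro ⟨hzb, hzw, hzV⟩
            have hz3 : z ∈ ortho perp (insert b (V : Set X)) :=
              mem_ortho_insert_iff.mpr ⟨hzb, hzV⟩
            rw [← hc] at hz3
            have hz2 : perp z c := (mem_ortho_insert_iff.mp hz3).1
            have hz1 : z ∈ ortho perp ({w, c} : Set X) := mem_ortho_pair_iff.mpr ⟨hzw, hz2⟩
            rw [← heq] at hz1
            exact ⟨(mem_ortho_pair_iff.mp hz1).2, hzw, hzV⟩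
    · right
      ext z
      simp only [Finset.coe_insert, mem_ortho_insert_iff]
      constructor
      · rintro ⟨_, hz⟩; exact hz
      · rintro ⟨hzw, hzV⟩
        have : z ∈ ortho perp (insert b (V : Set X)) := by rw [hV]; exact hzV
        exact ⟨(mem_ortho_insert_iff.mp this).1, hzw, hzV⟩

/-- Claim C: if `{a, f}` is a thin orthogonal pair, every element is orthogonal
to `a` or to `f`. -/
lemma claimC (hsymm : ∀ x y : X, perp x y → perp y x) (hirr : ∀ x : X, ¬ perp x x)
    (hL1 : CondL1 perp) {m : ℕ}
    (hub : ∀ D : Finset X, (D : Set X).Pairwise perp → D.card ≤ m)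
    {a f : X} (haf : perp a f) (thin : ortho perp (ortho perp {a, f}) = {a, f})
    (b : X) : perp b a ∨ perp b f := by
  classical
  by_contra hcon
  push_neg at hcon
  obtain ⟨hba, hbf⟩ := hcon
  have hbea : b ≠ a := by rintro rfl; exact hbf haf
  -- a maximal orthogonal subset of {a,f}⊥
  set P : ℕ → Prop := fun n => ∃ W : Finset X,
    (∀ w ∈ W, w ∈ ortho perp ({a, f} : Set X)) ∧ (W : Set X).Pairwise perp ∧ W.card = n with hP
  have hP0 : P 0 := ⟨∅, by simp, by simp, rfl⟩
  have hPk : P (Nat.findGreatest P m) := Nat.findGreatest_spec (Nat.zero_le m) hP0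
  obtain ⟨W, hWsub, hWpair, hWcard⟩ := hPk
  have hWmax : ∀ x, x ∈ ortho perp ({a, f} : Set X) → (∀ w ∈ W, perp x w) → False := by
    intro x hxo hxW
    have hxnW : x ∉ W := fun hmem => hirr x (hxW x hmem)
    have hpair' : ((insert x W : Finset X) : Set X).Pairwise perp := by
      rw [Finset.coe_insert]
      refine Set.Pairwise.insert hWpair ?_
      intro w hw _
      exact ⟨hxW w hw, hsymm _ _ (hxW w hw)⟩
    have hcard' : (insert x W).card = W.card + 1 := Finset.card_insert_of_notMem hxnW
    have hle : W.card + 1 ≤ m := by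
      have := hub (insert x W) hpair'
      rwa [hcard'] at this
    have : W.card + 1 ≤ Nat.findGreatest P m := by
      refine Nat.le_findGreatest hle ⟨insert x W, ?_, hpair', hcard'⟩
      intro w hw
      rcases Finset.mem_insert.mp hw with rfl | hw
      · exact hxo
      · exact hWsub w hw
    omega
  -- project b onto W⊥
  rcases proj hsymm hL1 W hWpair b with ⟨c, hcW, hc⟩ | hV
  · rcases lemW hsymm hirr hL1 haf thin W hWsub hWmax hcW with rfl | rfl
    · -- c = a : then f ∈ (W ∪ {a})⊥ = (W ∪ {b})⊥, so f ⊥ b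
      have hf : f ∈ ortho perp (insert c (W : Set X)) := by
        refine mem_ortho_insert_iff.mpr ⟨hsymm _ _ haf, ?_⟩
        intro w hw
        exact hsymm _ _ (mem_ortho_pair_iff.mp (hWsub w hw)).2
      rw [hc] at hf
      exact hbf (hsymm _ _ (mem_ortho_insert_iff.mp hf).1)
    · -- c = f : then a ∈ (W ∪ {f})⊥ = (W ∪ {b})⊥, so a ⊥ b
      have ha : a ∈ ortho perp (insert c (W : Set X)) := by
        refine mem_ortho_insert_iff.mpr ⟨haf, ?_⟩
        intro w hw
        exact hsymm _ _ (mem_ortho_pair_iff.mp (hWsub w hw)).1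
      rw [hc] at ha
      exact hba (hsymm _ _ (mem_ortho_insert_iff.mp ha).1)
  · -- degenerate case : (W ∪ {b})⊥ = W⊥ ∋ a, so a ⊥ b
    have ha : a ∈ ortho perp (W : Set X) := by
      intro w hw
      exact hsymm _ _ (mem_ortho_pair_iff.mp (hWsub w hw)).1
    rw [← hV] at ha
    exact hba (hsymm _ _ (mem_ortho_insert_iff.mp ha).1)

/-- The key lemma (★): thinness propagates along non-orthogonality. -/
lemma starT (hsymm : ∀ x y : X, perp x y → perp y x) (hirr : ∀ x : X, ¬ perp x x)
    (hL1 : CondL1 perp) {m : ℕ}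
    (hub : ∀ D : Finset X, (D : Set X).Pairwise perp → D.card ≤ m)
    {a f b : X} (haf : perp a f) (thin : ortho perp (ortho perp {a, f}) = {a, f})
    (hab : ¬ perp a b) :
    perp b f ∧ ortho perp (ortho perp {b, f}) = {b, f} := by
  have hbf : perp b f := by
    rcases claimC hsymm hirr hL1 hub haf thin b with h | h
    · exact absurd (hsymm _ _ h) hab
    · exact h
  refine ⟨hbf, ?_⟩
  apply Set.Subset.antisymm
  · intro z hz
    by_contra hznot
    simp only [Set.mem_insert_iff, Set.mem_singleton_iff] at hznot
    push_neg at hznot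
    obtain ⟨hzb, hzf⟩ := hznot
    -- {b,f}⊥ ⊆ {f,z}⊥
    have hsub : ortho perp ({b, f} : Set X) ⊆ ortho perp ({f, z} : Set X) := by
      intro w hw
      exact mem_ortho_pair_iff.mpr
        ⟨(mem_ortho_pair_iff.mp hw).2, hsymm _ _ (hz w hw)⟩
    obtain ⟨h, hhf, heq⟩ := hL1 f z hzf
    have hhmem : h ∈ ortho perp (ortho perp ({f, b} : Set X)) := by
      rw [Set.pair_comm f b]
      intro w hw
      have : w ∈ ortho perp ({f, h} : Set X) := by rw [heq]; exact hsub hw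
      exact hsymm _ _ (this h (by simp))
    have hhb : h = b := lemT hsymm hirr hL1 hbf hhf hhmem
    rw [hhb] at heq
    -- now heq : {f,b}⊥ = {f,z}⊥ ; hence ¬ z ⊥ a, so z ⊥ f by claim C, so z = b
    have hza : ¬ perp z a := by
      intro hza
      have haz : a ∈ ortho perp ({f, z} : Set X) :=
        mem_ortho_pair_iff.mpr ⟨haf, hsymm _ _ hza⟩
      rw [← heq] at haz
      exact hab ((mem_ortho_pair_iff.mp haz).2)
    have hzf' : perp z f := by
      rcases claimC hsymm hirr hL1 hub haf thin z with h | h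
      · exact absurd h hza
      · exact h
    have : z = b := by
      refine lemT hsymm hirr hL1 hbf hzf' ?_
      rw [Set.pair_comm f b]
      exact hz
    exact hzb this
  · intro z hz
    rcases hz with rfl | hz
    · exact mem_oo_of_mem hsymm (by simp)
    · rw [Set.mem_singleton_iff] at hz
      subst hz
      exact mem_oo_of_mem hsymm (by simp)

end Stmt9Aux

end Stmt9AuxSec

open Stmt9Aux in
/-- For an irredundant orthogonality space of finite rank
satisfying (L₁), the following are equivalent: (1) condition (L₂); (2) the
double orthocomplement of any pair of orthogonal elements contains a third
element; (3) the space is irreducible. -/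
theorem stmt9 {X : Type*} [Nonempty X] (perp : X → X → Prop)
    (hsymm : ∀ x y : X, perp x y → perp y x)
    (hirr : ∀ x : X, ¬ perp x x)
    (hirred : Irredundant perp)
    (hrank : ∃ m : ℕ, 0 < m ∧ HasRank perp m)
    (hL1 : CondL1 perp) :
    (CondL2 perp ↔
      ∀ e f : X, perp e f →
        ∃ g ∈ ortho perp (ortho perp ({e, f} : Set X)), g ≠ e ∧ g ≠ f) ∧
    ((∀ e f : X, perp e f →
        ∃ g ∈ ortho perp (ortho perp ({e, f} : Set X)), g ≠ e ∧ g ≠ f) ↔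
      ¬ ∃ A B : Set X, A.Nonempty ∧ B.Nonempty ∧ Disjoint A B ∧ A ∪ B = Set.univ ∧
        ∀ a ∈ A, ∀ b ∈ B, perp a b) := by
  classical
  obtain ⟨m, hm0, hex, hub⟩ := hrank
  constructor
  · -- (1) ↔ (2)
    constructor
    · intro hL2 e f hef
      obtain ⟨f', hf'e, hf'f, heq⟩ := hL2 e f (hsymm _ _ hef)
      refine ⟨f', ?_, hf'e, hf'f⟩
      intro w hw
      have : w ∈ ortho perp ({e, f'} : Set X) := by rw [← heq]; exact hw
      exact hsymm _ _ (this f' (by simp))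
    · intro h2 e g hge
      obtain ⟨h, hhmem, hhe, hhg⟩ := h2 e g (hsymm _ _ hge)
      obtain ⟨g', hg'e, heq⟩ := hL1 e h hhe
      -- {e,g}⊥ ⊆ {e,h}⊥ = {e,g'}⊥
      have hsub : ortho perp ({e, g} : Set X) ⊆ ortho perp ({e, h} : Set X) := by
        intro w hw
        exact mem_ortho_pair_iff.mpr ⟨(mem_ortho_pair_iff.mp hw).1, hsymm _ _ (hhmem w hw)⟩
      have hg'mem : g' ∈ ortho perp (ortho perp ({e, g} : Set X)) := by
        intro w hw
        have : w ∈ ortho perp ({e, g'} : Set X) := by rw [heq]; exact hsub hw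
        exact hsymm _ _ (this g' (by simp))
      have hg'g : g' = g := lemT hsymm hirr hL1 hge hg'e hg'mem
      rw [hg'g] at heq
      exact ⟨h, hhe, hhg, heq⟩
  · -- (2) ↔ (3)
    constructor
    · -- (2) → irreducible
      intro h2
      rintro ⟨A, B, ⟨a, ha⟩, ⟨b, hb⟩, hdisj, hunion, hcross⟩
      have key : ∀ (A' B' : Set X) (a' b' : X), a' ∈ A' → b' ∈ B' →
          (∀ x ∈ A', ∀ y ∈ B', perp x y) → A' ∪ B' = Set.univ →
          ∀ g, g ∈ ortho perp (ortho perp ({a', b'} : Set X)) → g ≠ a' → g ∈ A' → False := by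
        intro A' B' a' b' ha' hb' hcross' hunion' g hgmem hgne hgA
        obtain ⟨h, hha, heq⟩ := hL1 a' g hgne
        -- every w ⊥ a' satisfies w ⊥ g
        have hwg : ∀ w, perp w a' → perp w g := by
          intro w hwa
          have : w ∈ A' ∪ B' := hunion' ▸ Set.mem_univ w
          rcases this with hwA | hwB
          · have hwmem : w ∈ ortho perp ({a', b'} : Set X) :=
              mem_ortho_pair_iff.mpr ⟨hwa, hcross' w hwA b' hb'⟩
            exact hsymm _ _ (hgmem w hwmem)
          · exact hsymm _ _ (hcross' g hgA w hwB)
        have hhg : perp h g := hwg h hha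
        have : h ∈ ortho perp ({a', h} : Set X) := by
          rw [heq]
          exact mem_ortho_pair_iff.mpr ⟨hha, hhg⟩
        exact hirr h (mem_ortho_pair_iff.mp this).2
      have hab : perp a b := hcross a ha b hb
      obtain ⟨g, hgmem, hga, hgb⟩ := h2 a b hab
      have : g ∈ A ∪ B := hunion ▸ Set.mem_univ g
      rcases this with hgA | hgB
      · exact key A B a b ha hb hcross hunion g hgmem hga hgA
      · refine key B A b a hb ha (fun x hx y hy => hsymm _ _ (hcross y hy x hx))
          (by rw [Set.union_comm]; exact hunion) g ?_ hgb hgB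
        rw [Set.pair_comm b a]
        exact hgmem
    · -- irreducible → (2)
      intro hirr3
      by_contra hn2
      push_neg at hn2
      obtain ⟨e, f, hef, hall⟩ := hn2
      -- {e,f} is a thin pair
      have thin : ortho perp (ortho perp ({e, f} : Set X)) = {e, f} := by
        apply Set.Subset.antisymm
        · intro z hz
          by_cases hze : z = e
          · exact Or.inl hze
          · right
            exact hall z hz hze
        · intro z hz
          rcases hz with rfl | hz
          · exact mem_oo_of_mem hsymm (by simp)
          · rw [Set.mem_singleton_iff] at hz
            subst hz
            exact mem_oo_of_mem hsymm (by simp)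
      refine hirr3 ⟨{x | perp x f ∧ ortho perp (ortho perp ({x, f} : Set X)) = {x, f}},
        {x | perp x f ∧ ortho perp (ortho perp ({x, f} : Set X)) = {x, f}}ᶜ,
        ⟨e, hef, thin⟩, ⟨f, fun hf => hirr f hf.1⟩, disjoint_compl_right,
        Set.union_compl_self _, ?_⟩
      intro x hx y hy
      by_contra hxy
      exact hy ⟨(starT hsymm hirr hL1 hub hx.1 hx.2 hxy).1,
        (starT hsymm hirr hL1 hub hx.1 hx.2 hxy).2⟩
end

section
/- Let (X,⊥) be a linear orthogonality space of finite rank ≥ 4. Let e, f ∈ X with e ⊥ f, and let φ be an automorphism of (X,⊥) such that φ(e) = f and φ(d) = d for every d ∈ X with d ⊥ e and d ⊥ f. Then φ(f) = e. -/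
variable {X : Type*}

/-- In a linear orthogonality space of finite rank `≥ 4`, an
automorphism mapping `e` to an orthogonal element `f` and fixing everything
orthogonal to both necessarily maps `f` back to `e`. -/
theorem stmt11 {X : Type*} [Nonempty X] (perp : X → X → Prop)
    (hsymm : ∀ x y : X, perp x y → perp y x)
    (hirr : ∀ x : X, ¬ perp x x)
    (hirred : Irredundant perp)
    (hL1 : CondL1 perp) (hL2 : CondL2 perp)
    (hrank : ∃ m : ℕ, 4 ≤ m ∧ HasRank perp m)
    (e f : X) (hef : perp e f)
    (φ : X → X) (hbij : Function.Bijective φ)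
    (hauto : ∀ x y : X, perp x y ↔ perp (φ x) (φ y))
    (hφe : φ e = f)
    (hfix : ∀ d : X, perp d e → perp d f → φ d = d) :
    φ f = e := by
  -- let g := φ f
  set g := φ f with hg
  -- f ⊥ g
  have hfg : perp f g := by
    have := (hauto e f).mp hef
    rwa [hφe] at this
  -- everything ⊥ e and ⊥ f is ⊥ g
  have hCg : ∀ d : X, perp d e → perp d f → perp d g := by
    intro d hde hdf
    have := (hauto d f).mp hdf
    rwa [hfix d hde hdf] at this
  -- everything ⊥ f and ⊥ g is ⊥ e
  have hC'e : ∀ d : X, perp d f → perp d g → perp d e := by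
    intro d hdf hdg
    obtain ⟨d', hd'⟩ := hbij.2 d
    have hd'e : perp d' e := by
      have := (hauto d' e).mpr (by rwa [hd', hφe])
      exact this
    have hd'f : perp d' f := by
      have := (hauto d' f).mpr (by rwa [hd', ← hg])
      exact this
    have : d' = d := by rw [← hd', hfix d' hd'e hd'f]
    rwa [← this]
  -- key equivalence
  have key : ∀ x : X, perp x e ↔ perp x g := by
    intro x
    constructor
    · intro hxe
      by_cases hxf : perp x f
      · exact hCg x hxe hxf
      · rcases eq_or_ne x f with rfl | hne
        · exact hfg
        · obtain ⟨h, hhf, horth⟩ := hL1 f x hne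
          have heIn : e ∈ ortho perp ({f, x} : Set X) := by
            intro a ha
            simp only [Set.mem_insert_iff, Set.mem_singleton_iff] at ha
            rcases ha with rfl | rfl
            · exact hef
            · exact hsymm a e hxe
          rw [← horth] at heIn
          have heh : perp e h := heIn h (by simp)
          have hhg : perp h g := hCg h (hsymm e h heh) hhf
          have hgIn : g ∈ ortho perp ({f, h} : Set X) := by
            intro a ha
            simp only [Set.mem_insert_iff, Set.mem_singleton_iff] at ha
            rcases ha with rfl | rfl
            · exact hsymm a g hfg
            · exact hsymm a g hhg
          rw [horth] at hgIn
          exact hsymm g x (hgIn x (by simp))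
    · intro hxg
      by_cases hxf : perp x f
      · exact hC'e x hxf hxg
      · rcases eq_or_ne x f with rfl | hne
        · exact hsymm e _ hef
        · obtain ⟨h, hhf, horth⟩ := hL1 f x hne
          have hgIn : g ∈ ortho perp ({f, x} : Set X) := by
            intro a ha
            simp only [Set.mem_insert_iff, Set.mem_singleton_iff] at ha
            rcases ha with rfl | rfl
            · exact hsymm a g hfg
            · exact hsymm a g hxg
          rw [← horth] at hgIn
          have hgh : perp g h := hgIn h (by simp)
          have hhe : perp h e := hC'e h hhf (hsymm g h hgh)
          have heIn : e ∈ ortho perp ({f, h} : Set X) := by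
            intro a ha
            simp only [Set.mem_insert_iff, Set.mem_singleton_iff] at ha
            rcases ha with rfl | rfl
            · exact hef
            · exact hsymm a e hhe
          rw [horth] at heIn
          exact hsymm e x (heIn x (by simp))
  -- conclude by irredundance
  have : ortho perp ({g} : Set X) = ortho perp ({e} : Set X) := by
    ext x
    simp only [ortho, Set.mem_setOf_eq, Set.mem_singleton_iff, forall_eq]
    exact (key x).symm
  exact hirred g e this
end

section
/- Let (X,⊥) be a linear orthogonality space of finite rank ≥ 4 satisfying condition (R1). Let e and f be distinct elements of X and let n ≥ 1 be an integer. Then there is an automorphism φ of (X,⊥) such that φⁿ(e) = f and φ(d) = d for every d ∈ X with d ⊥ e and d ⊥ f; moreover, if e ⊥ f, then φ can be chosen so that in addition φⁿ(f) = e. -/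
variable {X : Type*}

/-- The data required by condition (R₁) for a line `L`: a divisible subgroup `C`
of `ℝ/2πℤ` and an injective group homomorphism `κ` from `C` into the automorphism
group of `(X, perp)` such that every `κ t` maps `L` onto itself, the action on `L`
is transitive, and every `κ t` fixes `L^⊥` pointwise. -/
def R1Witness (perp : X → X → Prop) (L : Set X)
    (C : AddSubgroup (AddCircle (2 * Real.pi))) (κ : C → Equiv.Perm X) : Prop :=
  (∀ (c : C) (n : ℕ), n ≠ 0 → ∃ d : C, n • d = c) ∧
  Function.Injective κ ∧
  (∀ s t : C, κ (s + t) = κ s * κ t) ∧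
  (∀ (t : C) (x y : X), perp x y ↔ perp (κ t x) (κ t y)) ∧
  (∀ t : C, ⇑(κ t) '' L = L) ∧
  (∀ g ∈ L, ∀ h ∈ L, ∃ t : C, κ t g = h) ∧
  (∀ t : C, ∀ d ∈ ortho perp L, κ t d = d)

/-- Condition (R₁): every line admits such a family of automorphisms. -/
def CondR1 (perp : X → X → Prop) : Prop :=
  ∀ e f : X, e ≠ f →
    ∃ (C : AddSubgroup (AddCircle (2 * Real.pi))) (κ : C → Equiv.Perm X),
      R1Witness perp (ortho perp (ortho perp {e, f})) C κ

/-- In a linear orthogonality space of finite rank `≥ 4`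
satisfying (R₁), for any distinct `e, f` and any `n ≥ 1` there is an
automorphism `φ` with `φⁿ e = f` fixing everything orthogonal to `e` and `f`;
if moreover `e ⊥ f`, then `φ` can be chosen with `φⁿ f = e` in addition. -/
theorem stmt12 {X : Type*} [Nonempty X] (perp : X → X → Prop)
    (hsymm : ∀ x y : X, perp x y → perp y x)
    (hirr : ∀ x : X, ¬ perp x x)
    (hirred : Irredundant perp)
    (hL1 : CondL1 perp) (hL2 : CondL2 perp)
    (hrank : ∃ m : ℕ, 4 ≤ m ∧ HasRank perp m)
    (hR1 : CondR1 perp)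
    (e f : X) (hef : e ≠ f) (n : ℕ) (hn : 1 ≤ n) :
    ∃ φ : X → X, Function.Bijective φ ∧
      (∀ x y : X, perp x y ↔ perp (φ x) (φ y)) ∧
      φ^[n] e = f ∧
      (∀ d : X, perp d e → perp d f → φ d = d) ∧
      (perp e f → φ^[n] f = e) := by
  classical
  obtain ⟨C, κ, hW⟩ := hR1 e f hef
  obtain ⟨hdiv, hinj, hhom, hperp, hmapL, htrans, hfix⟩ := hW
  set L := ortho perp (ortho perp ({e, f} : Set X)) with hL
  have heL : e ∈ L := by
    intro a ha
    exact hsymm a e (ha e (by simp))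
  have hfL : f ∈ L := by
    intro a ha
    exact hsymm a f (ha f (by simp))
  obtain ⟨t, ht⟩ := htrans e heL f hfL
  obtain ⟨c, hc⟩ := hdiv t n (by omega)
  have hzero : κ 0 = 1 := by
    have h0 := hhom 0 0
    rw [add_zero] at h0
    have : κ 0 * κ 0 = 1 * κ 0 := by rw [one_mul]; exact h0.symm
    exact (mul_right_cancel this)
  have hpow : ∀ m : ℕ, κ (m • c) = (κ c) ^ m := by
    intro m
    induction m with
    | zero => simpa using hzero
    | succ k ih => rw [succ_nsmul, hhom, ih, pow_succ]
  have hiter : (⇑(κ c))^[n] = ⇑((κ c) ^ n) := by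
    rw [← Equiv.Perm.coe_pow]
  have horthoim : ∀ (u : C) (A : Set X),
      ortho perp (⇑(κ u) '' A) = ⇑(κ u) '' ortho perp A := by
    intro u A
    ext x
    constructor
    · intro hx
      refine ⟨(κ u).symm x, ?_, (κ u).apply_symm_apply x⟩
      intro a ha
      have h1 := hx (κ u a) ⟨a, ha, rfl⟩
      have h2 := hperp u ((κ u).symm x) a
      rw [(κ u).apply_symm_apply] at h2
      exact h2.mpr h1
    · rintro ⟨y, hy, rfl⟩ z ⟨b, hb, rfl⟩
      exact (hperp u y b).mp (hy b hb)
  -- Lemma A : uniqueness of orthocomplement inside a line (one inclusion)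
  have lemA : ∀ a b c' : X, perp a b → perp c' b →
      c' ∈ ortho perp (ortho perp ({a, b} : Set X)) →
      ∀ x, perp x a → perp x c' := by
    intro a b c' hab hcb hcL x hxa
    by_cases hxb : x = b
    · subst hxb; exact hsymm c' x hcb
    · obtain ⟨h, hhb, heq⟩ := hL1 b x hxb
      have haorth : a ∈ ortho perp ({b, x} : Set X) := by
        intro z hz
        simp only [Set.mem_insert_iff, Set.mem_singleton_iff] at hz
        rcases hz with hz | hz
        · rw [hz]; exact hab
        · rw [hz]; exact hsymm x a hxa
      rw [← heq] at haorth
      have hah : perp a h := haorth h (by simp)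
      have hhmem : h ∈ ortho perp ({a, b} : Set X) := by
        intro z hz
        simp only [Set.mem_insert_iff, Set.mem_singleton_iff] at hz
        rcases hz with hz | hz
        · rw [hz]; exact hsymm a h hah
        · rw [hz]; exact hhb
      have hch : perp c' h := hcL h hhmem
      have hcmem : c' ∈ ortho perp ({b, h} : Set X) := by
        intro z hz
        simp only [Set.mem_insert_iff, Set.mem_singleton_iff] at hz
        rcases hz with hz | hz
        · rw [hz]; exact hcb
        · rw [hz]; exact hch
      rw [heq] at hcmem
      exact hsymm c' x (hcmem x (by simp))
  have hswap : perp e f → κ t f = e := by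
    intro hpf
    set g := κ t f with hg
    have hfg : perp f g := by
      have h := (hperp t e f).mp hpf
      rw [ht] at h
      rw [hg]
      exact h
    have hgL : g ∈ L := by
      rw [← hmapL t]
      exact ⟨f, hfL, rfl⟩
    have h1 : ∀ x, perp x e → perp x g :=
      fun x hx => lemA e f g hpf (hsymm f g hfg) hgL x hx
    have himg : (⇑(κ t) '' ({f, e} : Set X)) = ({g, f} : Set X) := by
      rw [Set.image_insert_eq, Set.image_singleton, ht, ← hg]
    have hLline : ortho perp (ortho perp ({g, f} : Set X)) = L := by
      rw [← himg, horthoim, horthoim, Set.pair_comm f e, ← hL]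
      exact hmapL t
    have heGF : e ∈ ortho perp (ortho perp ({g, f} : Set X)) := by
      rw [hLline]; exact heL
    have h2 : ∀ x, perp x g → perp x e :=
      fun x hx => lemA g f e (hsymm f g hfg) hpf heGF x hx
    have heq : ortho perp ({e} : Set X) = ortho perp ({g} : Set X) := by
      ext x
      simp only [ortho, Set.mem_setOf_eq, Set.mem_singleton_iff, forall_eq]
      exact ⟨h1 x, h2 x⟩
    exact (hirred e g heq).symm
  refine ⟨⇑(κ c), (κ c).bijective, fun x y => hperp c x y, ?_, ?_, ?_⟩
  · rw [hiter, ← hpow n, hc]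
    exact ht
  · intro d' hde hdf
    refine hfix c d' ?_
    intro x hx
    refine hsymm x d' (hx d' ?_)
    intro z hz
    simp only [Set.mem_insert_iff, Set.mem_singleton_iff] at hz
    rcases hz with hz | hz
    · rw [hz]; exact hde
    · rw [hz]; exact hdf
  · intro hpf
    rw [hiter, ← hpow n, hc]
    exact hswap hpf
end

section
/- Let K be a field, let H be a K-vector space of finite dimension ≥ 4, and let B be an anisotropic symmetric bilinear form on H such that every one-dimensional subspace of H contains a unit vector and such that the orthogonality space (P(H),⊥) satisfies condition (R1). Then: (i) K is formally real, i.e., whenever α₁² + ... + α_k² = 0 for α₁, ..., α_k ∈ K, then α₁ = ... = α_k = 0; (ii) for every linear order on K making K an ordered field, B is positive definite, i.e., B(v,v) > 0 for every nonzero v ∈ H. -/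
variable {X : Type*}

/-- Let `H` be a `K`-vector space of finite dimension `≥ 4`
with an anisotropic symmetric bilinear form `B` such that every one-dimensional
subspace contains a unit vector and `(P(H), ⊥)` satisfies (R₁). Then (i) `K` is
formally real, and (ii) with respect to any linear order making `K` an ordered
field, `B` is positive definite. -/
theorem stmt15 (K : Type*) [Field K]
    (H : Type*) [AddCommGroup H] [Module K H] [FiniteDimensional K H]
    (B : H → H → K)
    (hadd_left : ∀ u v w : H, B (u + v) w = B u w + B v w)
    (hsmul_left : ∀ (a : K) (u v : H), B (a • u) v = a * B u v)
    (hsymmB : ∀ u v : H, B u v = B v u)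
    (haniso : ∀ u : H, B u u = 0 → u = 0)
    (hdim : 4 ≤ Module.finrank K H)
    (hunit : ∀ v : H, v ≠ 0 → ∃ u ∈ Submodule.span K ({v} : Set H), B u u = 1)
    (hR1 : CondR1 (projPerp K H B)) :
    -- (i) `K` is formally real
    (∀ (k : ℕ) (α : Fin k → K), (∑ i, (α i) ^ 2) = 0 → ∀ i, α i = 0) ∧
    -- (ii) with respect to any order making `K` an ordered field, `B` is
    -- positive definite
    (∀ le : K → K → Prop,
      (∀ a b : K, le a b ∨ le b a) →
      (∀ a b : K, le a b → le b a → a = b) →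
      (∀ a b c : K, le a b → le b c → le a c) →
      (∀ a b c : K, le a b → le (a + c) (b + c)) →
      (∀ a b : K, le 0 a → le 0 b → le 0 (a * b)) →
      ∀ v : H, v ≠ 0 → le 0 (B v v) ∧ B v v ≠ 0) := by
  clear hR1
  -- basic bilinearity consequences
  have hBzl : ∀ w : H, B 0 w = 0 := by
    intro w
    have h := hsmul_left 0 0 w
    simpa using h
  have haddr : ∀ u v w : H, B u (v + w) = B u v + B u w := by
    intro u v w
    rw [hsymmB u (v + w), hadd_left, hsymmB v u, hsymmB w u]
  have hsmulr : ∀ (a : K) (u v : H), B u (a • v) = a * B u v := by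
    intro a u v
    rw [hsymmB u (a • v), hsmul_left, hsymmB v u]
  have hsubl : ∀ u v w : H, B (u - v) w = B u w - B v w := by
    intro u v w
    rw [sub_eq_add_neg, ← neg_one_smul K v, hadd_left, hsmul_left]
    ring
  -- every `B v v` is a nonzero square for `v ≠ 0`
  have keyA : ∀ v : H, v ≠ 0 → ∃ γ : K, γ ≠ 0 ∧ B v v = γ * γ := by
    intro v hv
    obtain ⟨u, hu, huu⟩ := hunit v hv
    rw [Submodule.mem_span_singleton] at hu
    obtain ⟨c, rfl⟩ := hu
    rw [hsmul_left, hsmulr] at huu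
    have hc : c ≠ 0 := by rintro rfl; simp at huu
    refine ⟨c⁻¹, inv_ne_zero hc, ?_⟩
    field_simp
    linear_combination huu
  -- construct two orthonormal vectors
  have hpos : 0 < Module.finrank K H := by omega
  have hnt : Nontrivial H := Module.nontrivial_of_finrank_pos hpos
  obtain ⟨v₁, hv₁⟩ := exists_ne (0 : H)
  obtain ⟨e₁, he₁mem, he₁⟩ := hunit v₁ hv₁
  have he₁0 : e₁ ≠ 0 := by
    rintro rfl
    rw [hBzl] at he₁
    exact zero_ne_one he₁
  obtain ⟨v₂, hv₂⟩ : ∃ v₂ : H, v₂ ∉ Submodule.span K {e₁} := by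
    by_contra h
    push_neg at h
    have htop : Submodule.span K ({e₁} : Set H) = ⊤ := eq_top_iff.mpr fun x _ => h x
    have h1 : Module.finrank K ↥(Submodule.span K ({e₁} : Set H)) = 1 :=
      finrank_span_singleton he₁0
    rw [htop, finrank_top] at h1
    omega
  set w : H := v₂ - B v₂ e₁ • e₁ with hwdef
  have hwperp : B w e₁ = 0 := by
    rw [hwdef, hsubl, hsmul_left, he₁]
    ring
  have hw0 : w ≠ 0 := by
    intro h
    apply hv₂
    have hv2 : v₂ = B v₂ e₁ • e₁ := by
      have := sub_eq_zero.mp h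
      exact this
    rw [hv2]
    exact Submodule.smul_mem _ _ (Submodule.mem_span_singleton_self e₁)
  obtain ⟨e₂, he₂mem, he₂⟩ := hunit w hw0
  have he₂perp : B e₂ e₁ = 0 := by
    obtain ⟨d, hd⟩ := Submodule.mem_span_singleton.mp he₂mem
    rw [← hd, hsmul_left, hwperp, mul_zero]
  have he₁₂ : B e₁ e₂ = 0 := by rw [hsymmB]; exact he₂perp
  -- quadratic form on the plane spanned by e₁, e₂
  have hexp : ∀ α β : K, B (α • e₁ + β • e₂) (α • e₁ + β • e₂) = α * α + β * β := by
    intro α β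
    simp only [hadd_left, haddr, hsmul_left, hsmulr, he₁, he₂, he₂perp, he₁₂]
    ring
  have hcoefα : ∀ α β : K, B (α • e₁ + β • e₂) e₁ = α := by
    intro α β
    simp only [hadd_left, hsmul_left, he₁, he₂perp]
    ring
  have hcoefβ : ∀ α β : K, B (α • e₁ + β • e₂) e₂ = β := by
    intro α β
    simp only [hadd_left, hsmul_left, he₂, he₁₂]
    ring
  have hzero2 : ∀ α β : K, α * α + β * β = 0 → α = 0 ∧ β = 0 := by
    intro α β h
    have hv : α • e₁ + β • e₂ = 0 := haniso _ (by rw [hexp]; exact h)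
    constructor
    · have h' := hcoefα α β
      rw [hv, hBzl] at h'
      exact h'.symm
    · have h' := hcoefβ α β
      rw [hv, hBzl] at h'
      exact h'.symm
  have hsum2 : ∀ α β : K, ∃ γ : K, α * α + β * β = γ * γ := by
    intro α β
    by_cases hv : α • e₁ + β • e₂ = 0
    · have hα : α = 0 := by
        have h' := hcoefα α β; rw [hv, hBzl] at h'; exact h'.symm
      have hβ : β = 0 := by
        have h' := hcoefβ α β; rw [hv, hBzl] at h'; exact h'.symm
      exact ⟨0, by rw [hα, hβ]; ring⟩
    · obtain ⟨γ, _, hγ⟩ := keyA _ hv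
      exact ⟨γ, by rw [← hγ, hexp]⟩
  -- every sum of squares is a square
  have hsumsq : ∀ (k : ℕ) (α : Fin k → K), ∃ γ : K, (∑ i, α i ^ 2) = γ * γ := by
    intro k
    induction k with
    | zero => intro α; exact ⟨0, by simp⟩
    | succ n ih =>
      intro α
      obtain ⟨γ', hγ'⟩ := ih (fun i => α i.succ)
      obtain ⟨γ, hγ⟩ := hsum2 (α 0) γ'
      refine ⟨γ, ?_⟩
      rw [Fin.sum_univ_succ, hγ', ← hγ]
      ring
  have parti : ∀ (k : ℕ) (α : Fin k → K), (∑ i, (α i) ^ 2) = 0 → ∀ i, α i = 0 := by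
    intro k
    induction k with
    | zero => intro α _ i; exact i.elim0
    | succ n ih =>
      intro α h i
      obtain ⟨γ', hγ'⟩ := hsumsq n (fun j => α j.succ)
      rw [Fin.sum_univ_succ, hγ'] at h
      have h0 : α 0 * α 0 + γ' * γ' = 0 := by rw [← h]; ring
      obtain ⟨hα0, hγ0⟩ := hzero2 _ _ h0
      have htail : (∑ j : Fin n, α j.succ ^ 2) = 0 := by rw [hγ', hγ0, mul_zero]
      cases i using Fin.cases with
      | zero => exact hα0
      | succ j => exact ih _ htail j
  refine ⟨parti, ?_⟩
  intro le htot _ _ haddle hmulle v hv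
  obtain ⟨γ, hγ0, hγ⟩ := keyA v hv
  refine ⟨?_, fun h => hv (haniso v h)⟩
  rw [hγ]
  rcases htot 0 γ with h | h
  · exact hmulle γ γ h h
  · have h1 : le 0 (-γ) := by
      have h2 := haddle γ 0 (-γ) h
      simpa using h2
    have h3 := hmulle _ _ h1 h1
    rwa [neg_mul_neg] at h3
end

section
/- Let K be a linearly ordered field and let H be a finite-dimensional K-vector space with a positive definite symmetric bilinear form B such that every one-dimensional subspace of H contains a unit vector. For nonzero x, y ∈ H, write ⟨x⟩ ≈ ⟨y⟩ if there exist medial vectors x' ∈ ⟨x⟩ and y' ∈ ⟨y⟩ such that x' − y' is infinitesimal. Then: (a) ≈ is a well-defined equivalence relation on the set P(H) of one-dimensional subspaces of H; (b) if ⟨x⟩ ≈ ⟨y⟩ then B(x,y) ≠ 0; (c) for every orthogonal operator U of (H,B) and all nonzero x, y ∈ H, ⟨x⟩ ≈ ⟨y⟩ if and only if ⟨Ux⟩ ≈ ⟨Uy⟩; (d) if K contains a nonzero infinitesimal element and dim H ≥ 2, then there exist distinct one-dimensional subspaces of H that are ≈-equivalent. -/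
section Holland

variable (K : Type*) [Field K] [LinearOrder K] [IsStrictOrderedRing K]

/-- An element of an ordered field is infinitesimal if its absolute value is
smaller than `1/n` for every positive integer `n`. -/
def Infinitesimal (α : K) : Prop := ∀ n : ℕ, 0 < n → |α| < 1 / (n : K)

/-- An element of an ordered field is medial if `1/n < |α| < n` for some
positive integer `n`. -/
def Medial (α : K) : Prop := ∃ n : ℕ, 0 < n ∧ 1 / (n : K) < |α| ∧ |α| < (n : K)

variable (H : Type*) [AddCommGroup H] [Module K H] (B : H → H → K)

/-- A vector is infinitesimal if its squared length is infinitesimal. -/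
def InfVec (x : H) : Prop := Infinitesimal K (B x x)

/-- A vector is medial if its squared length is medial. -/
def MedVec (x : H) : Prop := Medial K (B x x)

/-- `⟨x⟩ ≈ ⟨y⟩`: there are medial vectors `x' ∈ ⟨x⟩` and `y' ∈ ⟨y⟩` whose
difference is infinitesimal. -/
def ApproxRel (x y : H) : Prop :=
  ∃ x' ∈ Submodule.span K ({x} : Set H), ∃ y' ∈ Submodule.span K ({y} : Set H),
    MedVec K H B x' ∧ MedVec K H B y' ∧ InfVec K H B (x' - y')

end Holland

/-!
Infinitesimal scalars are closed under sums and under multiplication by medial scalars, and medial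
scalars form a multiplicative group. For vectors, the parallelogram law gives
`B (u + v) (u + v) ≤ 2 (B u u + B v v)`, which replaces the triangle inequality (there are no
square roots in `K`), so infinitesimal vectors are closed under sums. Transitivity then follows by
rescaling: the two witnesses in `⟨y⟩` differ by a scalar `c` with `c²` medial. If `B x y = 0`,
then `B (x' - y') (x' - y') ≥ B x' x'` is not infinitesimal. For (d), with `e₁, e₂` orthonormal
and `δ ≠ 0` infinitesimal, `⟨e₁⟩` and `⟨e₁ + δ e₂⟩` are distinct but `≈`-related.
-/

open LinearMap (BilinForm)

namespace Infinitesimal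

variable {K : Type*} [Field K] [LinearOrder K] {a b : K}

lemma of_abs_le (hb : Infinitesimal K b) (hab : |a| ≤ |b|) : Infinitesimal K a :=
  fun n hn => hab.trans_lt (hb n hn)

lemma abs_lt_one (ha : Infinitesimal K a) : |a| < 1 := by
  simpa using ha 1 one_pos

variable [IsStrictOrderedRing K]

protected lemma zero : Infinitesimal K 0 := fun n hn => by
  rw [abs_zero]
  positivity

protected lemma add (ha : Infinitesimal K a) (hb : Infinitesimal K b) :
    Infinitesimal K (a + b) := by
  intro n hn
  have hn' : (0 : K) < n := by exact_mod_cast hn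
  calc |a + b| ≤ |a| + |b| := abs_add_le a b
    _ < 1 / ((2 * n : ℕ) : K) + 1 / ((2 * n : ℕ) : K) :=
        add_lt_add (ha _ (by omega)) (hb _ (by omega))
    _ = 1 / n := by push_cast; field_simp; norm_num

protected lemma mul (ha : Infinitesimal K a) (hb : Infinitesimal K b) :
    Infinitesimal K (a * b) :=
  ha.of_abs_le <| by
    rw [abs_mul]
    exact mul_le_of_le_one_right (abs_nonneg a) hb.abs_lt_one.le

end Infinitesimal

namespace Medial

variable {K : Type*} [Field K] [LinearOrder K] {a b : K}

lemma not_infinitesimal (ha : Medial K a) : ¬Infinitesimal K a := by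
  obtain ⟨n, hn, hlow, -⟩ := ha
  exact fun h => (h n hn).not_gt hlow

variable [IsStrictOrderedRing K]

protected lemma one : Medial K 1 :=
  ⟨2, two_pos, by norm_num, by norm_num⟩

lemma ne_zero (ha : Medial K a) : a ≠ 0 := by
  rintro rfl
  exact ha.not_infinitesimal Infinitesimal.zero

protected lemma mul (ha : Medial K a) (hb : Medial K b) : Medial K (a * b) := by
  obtain ⟨m, hm, hma, ham⟩ := ha
  obtain ⟨n, hn, hnb, hbn⟩ := hb
  refine ⟨m * n, Nat.mul_pos hm hn, ?_, ?_⟩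
  · calc 1 / ((m * n : ℕ) : K) = 1 / m * (1 / n) := by push_cast; rw [one_div_mul_one_div]
      _ < |a| * |b| := mul_lt_mul'' hma hnb (by positivity) (by positivity)
      _ = |a * b| := (abs_mul a b).symm
  · rw [abs_mul, Nat.cast_mul]
    exact mul_lt_mul'' ham hbn (abs_nonneg a) (abs_nonneg b)

protected lemma inv (ha : Medial K a) : Medial K a⁻¹ := by
  obtain ⟨n, hn, hna, han⟩ := ha
  have hn' : (0 : K) < n := by exact_mod_cast hn
  have ha' : 0 < |a| := (one_div_pos.mpr hn').trans hna
  refine ⟨n, hn, ?_, ?_⟩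
  · rw [abs_inv, ← one_div]
    exact one_div_lt_one_div_of_lt ha' han
  · rw [abs_inv, ← one_div]
    exact (one_div_lt hn' ha').mp hna

protected lemma div (ha : Medial K a) (hb : Medial K b) : Medial K (a / b) := by
  rw [div_eq_mul_inv]
  exact ha.mul hb.inv

lemma mul_infinitesimal (ha : Medial K a) (hb : Infinitesimal K b) :
    Infinitesimal K (a * b) := by
  obtain ⟨m, hm, -, ham⟩ := ha
  intro n hn
  have hm' : (0 : K) < m := by exact_mod_cast hm
  calc |a * b| = |a| * |b| := abs_mul a b
    _ ≤ m * |b| := mul_le_mul_of_nonneg_right ham.le (abs_nonneg b)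
    _ < m * (1 / ((m * n : ℕ) : K)) := mul_lt_mul_of_pos_left (hb _ (Nat.mul_pos hm hn)) hm'
    _ = 1 / n := by push_cast; field_simp

end Medial

lemma exists_smul_eq_of_mem_span_singleton {K M : Type*} [DivisionRing K] [AddCommGroup M]
    [Module K M] {y y₁ y₂ : M} (hy₁ : y₁ ∈ K ∙ y) (hy₂ : y₂ ∈ K ∙ y) (hne : y₁ ≠ 0) :
    ∃ c : K, c • y₁ = y₂ := by
  obtain ⟨a, rfl⟩ := Submodule.mem_span_singleton.mp hy₁
  have ha : a ≠ 0 := by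
    rintro rfl
    exact hne (zero_smul K y)
  rw [← Submodule.span_singleton_smul_eq (IsUnit.mk0 a ha)] at hy₂
  exact Submodule.mem_span_singleton.mp hy₂

lemma LinearMap.BilinForm.parallelogram_law {R M : Type*} [CommRing R] [AddCommGroup M]
    [Module R M] (B : BilinForm R M) (u v : M) :
    B (u + v) (u + v) + B (u - v) (u - v) = 2 * (B u u + B v v) := by
  simp only [map_add, map_sub, LinearMap.add_apply, LinearMap.sub_apply]
  ring

lemma LinearMap.BilinForm.exists_orthonormal_pair {K H : Type*} [Field K] [AddCommGroup H]
    [Module K H] {B : BilinForm K H}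
    (hunit : ∀ v : H, v ≠ 0 → ∃ u ∈ K ∙ v, B u u = 1) (hdim : 2 ≤ Module.finrank K H) :
    ∃ e₁ e₂ : H, B e₁ e₁ = 1 ∧ B e₂ e₂ = 1 ∧ B e₁ e₂ = 0 := by
  have : Nontrivial H := Module.nontrivial_of_finrank_pos (R := K) (by omega)
  obtain ⟨v, hv⟩ := exists_ne (0 : H)
  obtain ⟨e₁, -, he₁⟩ := hunit v hv
  have he₁0 : e₁ ≠ 0 := by
    rintro rfl
    simp at he₁
  have hcompl : IsCompl (K ∙ e₁) (B.orthogonal (K ∙ e₁)) :=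
    isCompl_span_singleton_orthogonal (he₁.symm ▸ one_ne_zero)
  have horth : B.orthogonal (K ∙ e₁) ≠ ⊥ := by
    intro hbot
    have htop : K ∙ e₁ = ⊤ := eq_top_of_isCompl_bot (hbot ▸ hcompl)
    have := finrank_span_singleton (K := K) he₁0
    rw [htop, finrank_top] at this
    omega
  obtain ⟨f, hf, hf0⟩ := Submodule.exists_mem_ne_zero_of_ne_bot horth
  obtain ⟨e₂, he₂f, he₂⟩ := hunit f hf0
  obtain ⟨a, rfl⟩ := Submodule.mem_span_singleton.mp he₂f
  have he₁f : B e₁ f = 0 := mem_orthogonal_iff.mp hf e₁ (Submodule.mem_span_singleton_self e₁)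
  exact ⟨e₁, a • f, he₁, he₂, by simp [he₁f]⟩

section Approx

variable {K : Type*} [Field K] [LinearOrder K]
  {H : Type*} [AddCommGroup H] [Module K H] {B : BilinForm K H} {c : K} {u v x y z : H}

lemma InfVec.neg (hv : InfVec K H (B · ·) v) : InfVec K H (B · ·) (-v) := by
  simpa only [InfVec, map_neg, LinearMap.neg_apply, neg_neg] using hv

lemma ApproxRel.symm (h : ApproxRel K H (B · ·) x y) : ApproxRel K H (B · ·) y x := by
  obtain ⟨x', hx', y', hy', hmx, hmy, hi⟩ := h
  exact ⟨y', hy', x', hx', hmy, hmx, by simpa only [neg_sub] using hi.neg⟩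

section Map

variable {H' : Type*} [AddCommGroup H'] [Module K H'] {B' : BilinForm K H'}

lemma ApproxRel.map (U : H →ₗ[K] H') (hU : ∀ a b, B' (U a) (U b) = B a b)
    (h : ApproxRel K H (B · ·) x y) : ApproxRel K H' (B' · ·) (U x) (U y) := by
  obtain ⟨x', hx', y', hy', hmx, hmy, hi⟩ := h
  have hspan : ∀ {v w : H}, w ∈ K ∙ v → U w ∈ K ∙ U v := fun hw => by
    simpa using Submodule.apply_mem_span_image_of_mem_span U hw
  refine ⟨U x', hspan hx', U y', hspan hy', ?_, ?_, ?_⟩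
  · simpa only [MedVec, hU] using hmx
  · simpa only [MedVec, hU] using hmy
  · simpa only [InfVec, ← map_sub, hU] using hi

lemma approxRel_map_iff (U : H ≃ₗ[K] H') (hU : ∀ a b, B' (U a) (U b) = B a b) :
    ApproxRel K H' (B' · ·) (U x) (U y) ↔ ApproxRel K H (B · ·) x y := by
  refine ⟨fun h => ?_, ApproxRel.map U.toLinearMap hU⟩
  have hU' : ∀ a b, B (U.symm a) (U.symm b) = B' a b := fun a b => by
    rw [← hU, U.apply_symm_apply, U.apply_symm_apply]
  simpa using h.map U.symm.toLinearMap hU'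

end Map

variable [IsStrictOrderedRing K]

lemma InfVec.zero : InfVec K H (B · ·) 0 := by
  simpa [InfVec] using Infinitesimal.zero

lemma InfVec.smul (hc : Medial K (c * c)) (hv : InfVec K H (B · ·) v) :
    InfVec K H (B · ·) (c • v) := by
  simpa only [InfVec, map_smul, LinearMap.smul_apply, smul_eq_mul, mul_assoc] using
    hc.mul_infinitesimal hv

lemma InfVec.add (hB : B.IsNonneg) (hu : InfVec K H (B · ·) u) (hv : InfVec K H (B · ·) v) :
    InfVec K H (B · ·) (u + v) := by
  have huv : Infinitesimal K (B u u + B v v) := Infinitesimal.add hu hv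
  have hsum : Infinitesimal K (2 * (B u u + B v v)) := by
    rw [two_mul]
    exact huv.add huv
  refine hsum.of_abs_le ?_
  rw [abs_of_nonneg (hB.nonneg _), abs_of_nonneg (by linarith [hB.nonneg u, hB.nonneg v])]
  linarith [B.parallelogram_law u v, hB.nonneg (u - v)]

lemma MedVec.ne_zero (hv : MedVec K H (B · ·) v) : v ≠ 0 := by
  rintro rfl
  simpa [MedVec] using Medial.ne_zero hv

lemma MedVec.smul (hc : Medial K (c * c)) (hv : MedVec K H (B · ·) v) :
    MedVec K H (B · ·) (c • v) := by
  simpa only [MedVec, map_smul, LinearMap.smul_apply, smul_eq_mul, mul_assoc] using hc.mul hv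

lemma MedVec.of_apply_self_eq_one (hv : B v v = 1) : MedVec K H (B · ·) v := by
  simpa only [MedVec, hv] using Medial.one

lemma ApproxRel.refl_of_mem (hu : u ∈ K ∙ x) (hmed : MedVec K H (B · ·) u) :
    ApproxRel K H (B · ·) x x :=
  ⟨u, hu, u, hu, hmed, hmed, by simpa only [sub_self] using InfVec.zero⟩

lemma ApproxRel.trans (hB : B.IsNonneg) (hxy : ApproxRel K H (B · ·) x y)
    (hyz : ApproxRel K H (B · ·) y z) : ApproxRel K H (B · ·) x z := by
  obtain ⟨x₁, hx₁, y₁, hy₁, hmx₁, hmy₁, hi₁⟩ := hxy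
  obtain ⟨y₂, hy₂, z₂, hz₂, hmy₂, hmz₂, hi₂⟩ := hyz
  obtain ⟨c, rfl⟩ := exists_smul_eq_of_mem_span_singleton hy₁ hy₂ hmy₁.ne_zero
  have hc : Medial K (c * c) := by
    have hcc : c * c = B (c • y₁) (c • y₁) / B y₁ y₁ := by
      simp only [map_smul, LinearMap.smul_apply, smul_eq_mul]
      field_simp [Medial.ne_zero hmy₁]
    rw [hcc]
    exact Medial.div hmy₂ hmy₁
  refine ⟨c • x₁, Submodule.smul_mem _ c hx₁, z₂, hz₂, hmx₁.smul hc, hmz₂, ?_⟩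
  rw [show c • x₁ - z₂ = c • (x₁ - y₁) + (c • y₁ - z₂) by rw [smul_sub]; abel]
  exact (hi₁.smul hc).add hB hi₂

lemma ApproxRel.apply_ne_zero (hB : B.IsPosSemidef) (h : ApproxRel K H (B · ·) x y) :
    B x y ≠ 0 := by
  obtain ⟨x', hx', y', hy', hmx, -, hi⟩ := h
  obtain ⟨a, rfl⟩ := Submodule.mem_span_singleton.mp hx'
  obtain ⟨b, rfl⟩ := Submodule.mem_span_singleton.mp hy'
  intro hxy
  have hyx : B y x = 0 := hB.eq y x ▸ hxy
  have hsub : B (a • x - b • y) (a • x - b • y) = B (a • x) (a • x) + B (b • y) (b • y) := by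
    simp only [map_sub, map_smul, LinearMap.sub_apply, LinearMap.smul_apply, smul_eq_mul, hxy,
      hyx]
    ring
  have hi' : Infinitesimal K (B (a • x) (a • x) + B (b • y) (b • y)) := hsub ▸ hi
  refine Medial.not_infinitesimal (a := B (a • x) (a • x)) hmx (hi'.of_abs_le ?_)
  rw [abs_of_nonneg (hB.nonneg _), abs_of_nonneg (add_nonneg (hB.nonneg _) (hB.nonneg _))]
  exact le_add_of_nonneg_right (hB.nonneg _)

lemma exists_approxRel_of_infinitesimal (hB : B.IsSymm)
    (hunit : ∀ v : H, v ≠ 0 → ∃ u ∈ K ∙ v, B u u = 1) (hdim : 2 ≤ Module.finrank K H) {δ : K}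
    (hδ : δ ≠ 0) (hδi : Infinitesimal K δ) :
    ∃ x y : H, x ≠ 0 ∧ y ≠ 0 ∧ K ∙ x ≠ K ∙ y ∧ ApproxRel K H (B · ·) x y := by
  obtain ⟨e₁, e₂, he₁, he₂, h₁₂⟩ := B.exists_orthonormal_pair hunit hdim
  have h₂₁ : B e₂ e₁ = 0 := (hB.eq e₂ e₁).trans h₁₂
  have hδδ : Infinitesimal K (δ * δ) := hδi.mul hδi
  have hmed₁ : MedVec K H (B · ·) e₁ := .of_apply_self_eq_one he₁
  have hmed₂ : MedVec K H (B · ·) (e₁ + δ • e₂) := by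
    show Medial K (B (e₁ + δ • e₂) (e₁ + δ • e₂))
    have hsq : B (e₁ + δ • e₂) (e₁ + δ • e₂) = 1 + δ * δ := by
      simp [he₁, he₂, h₁₂, h₂₁]
    have hlt : δ * δ < 1 := (le_abs_self _).trans_lt hδδ.abs_lt_one
    have hpos : 0 ≤ δ * δ := mul_self_nonneg δ
    rw [hsq]
    refine ⟨2, two_pos, ?_, ?_⟩ <;> rw [abs_of_pos (by linarith)] <;> push_cast <;> linarith
  refine ⟨e₁, e₁ + δ • e₂, hmed₁.ne_zero, hmed₂.ne_zero, fun hspan => hδ ?_,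
    e₁, Submodule.mem_span_singleton_self e₁, _, Submodule.mem_span_singleton_self _,
    hmed₁, hmed₂, ?_⟩
  · obtain ⟨c, hc⟩ := Submodule.mem_span_singleton.mp
      (hspan ▸ Submodule.mem_span_singleton_self (e₁ + δ • e₂))
    simpa [he₂, h₁₂] using congrArg (B · e₂) hc.symm
  · show Infinitesimal K (B (e₁ - (e₁ + δ • e₂)) (e₁ - (e₁ + δ • e₂)))
    simpa [he₂] using hδδ

end Approx

theorem stmt18_general (K : Type*) [Field K] [LinearOrder K] [IsStrictOrderedRing K]
    (H : Type*) [AddCommGroup H] [Module K H]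
    (B : H → H → K)
    (hadd_left : ∀ u v w : H, B (u + v) w = B u w + B v w)
    (hsmul_left : ∀ (a : K) (u v : H), B (a • u) v = a * B u v)
    (hsymmB : ∀ u v : H, B u v = B v u)
    (hposdef : ∀ v : H, v ≠ 0 → 0 < B v v)
    (hunit : ∀ v : H, v ≠ 0 → ∃ u ∈ Submodule.span K ({v} : Set H), B u u = 1) :
    -- (a) `≈` is well defined on one-dimensional subspaces
    (∀ x₁ x₂ y₁ y₂ : H, x₁ ≠ 0 → x₂ ≠ 0 → y₁ ≠ 0 → y₂ ≠ 0 →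
      Submodule.span K ({x₁} : Set H) = Submodule.span K ({x₂} : Set H) →
      Submodule.span K ({y₁} : Set H) = Submodule.span K ({y₂} : Set H) →
      (ApproxRel K H B x₁ y₁ ↔ ApproxRel K H B x₂ y₂)) ∧
    -- (a) `≈` is reflexive, symmetric and transitive on nonzero vectors
    (∀ x : H, x ≠ 0 → ApproxRel K H B x x) ∧
    (∀ x y : H, x ≠ 0 → y ≠ 0 → ApproxRel K H B x y → ApproxRel K H B y x) ∧
    (∀ x y z : H, x ≠ 0 → y ≠ 0 → z ≠ 0 →
      ApproxRel K H B x y → ApproxRel K H B y z → ApproxRel K H B x z) ∧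
    -- (b) `≈`-related subspaces are non-orthogonal
    (∀ x y : H, x ≠ 0 → y ≠ 0 → ApproxRel K H B x y → B x y ≠ 0) ∧
    -- (c) `≈` is invariant under orthogonal operators
    (∀ U : H ≃ₗ[K] H, (∀ a b : H, B (U a) (U b) = B a b) →
      ∀ x y : H, x ≠ 0 → y ≠ 0 →
        (ApproxRel K H B x y ↔ ApproxRel K H B (U x) (U y))) ∧
    -- (d) a nonzero infinitesimal scalar yields distinct `≈`-related subspaces
    ((∃ δ : K, δ ≠ 0 ∧ Infinitesimal K δ) → 2 ≤ Module.finrank K H →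
      ∃ x y : H, x ≠ 0 ∧ y ≠ 0 ∧
        Submodule.span K ({x} : Set H) ≠ Submodule.span K ({y} : Set H) ∧
        ApproxRel K H B x y) := by
  obtain ⟨B, rfl⟩ : ∃ B' : BilinForm K H, (B' · ·) = B :=
    ⟨LinearMap.mk₂ K B hadd_left hsmul_left (fun u v w => by simp only [hsymmB u, hadd_left])
      (fun a u v => by simp only [hsymmB u, hsmul_left, smul_eq_mul]), rfl⟩
  have hsymm : B.IsSymm := ⟨hsymmB⟩
  have hnonneg : B.IsNonneg :=
    ⟨fun v => (eq_or_ne v 0).elim (fun h => by simp [h]) fun h => (hposdef v h).le⟩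
  refine ⟨fun _ _ _ _ _ _ _ _ hx hy => by simp only [ApproxRel, hx, hy], fun x hx => ?_,
    fun _ _ _ _ => ApproxRel.symm, fun _ _ _ _ _ _ => ApproxRel.trans hnonneg,
    fun _ _ _ _ => ApproxRel.apply_ne_zero ⟨hsymm, hnonneg⟩,
    fun U hU _ _ _ _ => (approxRel_map_iff U hU).symm,
    fun ⟨_, hδ, hδi⟩ hdim => exists_approxRel_of_infinitesimal hsymm hunit hdim hδ hδi⟩
  obtain ⟨u, hu, huu⟩ := hunit x hx
  exact .refl_of_mem hu (.of_apply_self_eq_one huu)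

/-- Properties of the relation `≈` on `P(H)` for a finite
dimensional positive definite quadratic space over a linearly ordered field
possessing unit vectors in every one-dimensional subspace: (a) `≈` is a
well-defined equivalence relation on `P(H)`; (b) `≈`-related subspaces are
non-orthogonal; (c) `≈` is invariant under orthogonal operators; (d) if `K`
contains a nonzero infinitesimal and `dim H ≥ 2`, then `≈` is non-trivial. -/
theorem stmt18 (K : Type*) [Field K] [LinearOrder K] [IsStrictOrderedRing K]
    (H : Type*) [AddCommGroup H] [Module K H] [FiniteDimensional K H]
    (B : H → H → K)
    (hadd_left : ∀ u v w : H, B (u + v) w = B u w + B v w)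
    (hsmul_left : ∀ (a : K) (u v : H), B (a • u) v = a * B u v)
    (hsymmB : ∀ u v : H, B u v = B v u)
    (hposdef : ∀ v : H, v ≠ 0 → 0 < B v v)
    (hunit : ∀ v : H, v ≠ 0 → ∃ u ∈ Submodule.span K ({v} : Set H), B u u = 1) :
    -- (a) `≈` is well defined on one-dimensional subspaces
    (∀ x₁ x₂ y₁ y₂ : H, x₁ ≠ 0 → x₂ ≠ 0 → y₁ ≠ 0 → y₂ ≠ 0 →
      Submodule.span K ({x₁} : Set H) = Submodule.span K ({x₂} : Set H) →
      Submodule.span K ({y₁} : Set H) = Submodule.span K ({y₂} : Set H) →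
      (ApproxRel K H B x₁ y₁ ↔ ApproxRel K H B x₂ y₂)) ∧
    -- (a) `≈` is reflexive, symmetric and transitive on nonzero vectors
    (∀ x : H, x ≠ 0 → ApproxRel K H B x x) ∧
    (∀ x y : H, x ≠ 0 → y ≠ 0 → ApproxRel K H B x y → ApproxRel K H B y x) ∧
    (∀ x y z : H, x ≠ 0 → y ≠ 0 → z ≠ 0 →
      ApproxRel K H B x y → ApproxRel K H B y z → ApproxRel K H B x z) ∧
    -- (b) `≈`-related subspaces are non-orthogonal
    (∀ x y : H, x ≠ 0 → y ≠ 0 → ApproxRel K H B x y → B x y ≠ 0) ∧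
    -- (c) `≈` is invariant under orthogonal operators
    (∀ U : H ≃ₗ[K] H, (∀ a b : H, B (U a) (U b) = B a b) →
      ∀ x y : H, x ≠ 0 → y ≠ 0 →
        (ApproxRel K H B x y ↔ ApproxRel K H B (U x) (U y))) ∧
    -- (d) a nonzero infinitesimal scalar yields distinct `≈`-related subspaces
    ((∃ δ : K, δ ≠ 0 ∧ Infinitesimal K δ) → 2 ≤ Module.finrank K H →
      ∃ x y : H, x ≠ 0 ∧ y ≠ 0 ∧
        Submodule.span K ({x} : Set H) ≠ Submodule.span K ({y} : Set H) ∧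
        ApproxRel K H B x y) :=
  stmt18_general K H B hadd_left hsmul_left hsymmB hposdef hunit
end
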